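/- arXiv:1501.03720 — 4 statements merged into one kernel-verified Lean document; each statement's English description precedes it below -/
import Mathlib

section
/- Let f : ℝ^m → A_Q(ℝ^n) be a measurable map (with respect to the Borel σ-algebra induced by the metric G). Then there exist Lebesgue-measurable functions f_1,…,f_Q : ℝ^m → ℝ^n such that f(x) equals the unordered Q-tuple {f_1(x),…,f_Q(x)} for Lebesgue-almost every x ∈ ℝ^m. -/
open MeasureTheory
open scoped BigOperators

/-- The distance `G` on ordered `Q`-tuples of points of `ℝⁿ`:
`G(P,S) = min_{σ ∈ S_Q} (∑ i |P i - S (σ i)|²)^{1/2}`. -/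
noncomputable def Gdist (n Q : ℕ) (P S : Fin Q → EuclideanSpace ℝ (Fin n)) : ℝ :=
  Finset.univ.inf' Finset.univ_nonempty
    (fun σ : Equiv.Perm (Fin Q) => Real.sqrt (∑ i, ‖P i - S (σ i)‖ ^ 2))

/-- Two `Q`-tuples are identified when they differ by a permutation of their entries. -/
def permSetoid (n Q : ℕ) : Setoid (Fin Q → EuclideanSpace ℝ (Fin n)) where
  r P S := ∃ σ : Equiv.Perm (Fin Q), ∀ i, P i = S (σ i)
  iseqv := by
    constructor
    · intro P
      exact ⟨Equiv.refl _, fun i => rfl⟩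
    · rintro P S ⟨σ, h⟩
      refine ⟨σ.symm, fun i => ?_⟩
      rw [h (σ.symm i), Equiv.apply_symm_apply]
    · rintro P S R ⟨σ, h⟩ ⟨τ, h'⟩
      refine ⟨σ.trans τ, fun i => ?_⟩
      rw [h i, h' (σ i)]
      rfl

/-- The space `A_Q(ℝⁿ)` of unordered `Q`-tuples of points of `ℝⁿ`. -/
def AQ (n Q : ℕ) := Quotient (permSetoid n Q)

/-- The metric `G` on `A_Q(ℝⁿ)`, computed on (arbitrary) representatives. -/
noncomputable def GdistQ (n Q : ℕ) (x y : AQ n Q) : ℝ :=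
  Gdist n Q x.out y.out

/-- The Borel σ-algebra on `A_Q(ℝⁿ)` induced by the metric `G`:
the σ-algebra generated by the open balls of `G`. -/
def AQBorel (n Q : ℕ) : MeasurableSpace (AQ n Q) :=
  MeasurableSpace.generateFrom {s | ∃ p ε, s = {q | GdistQ n Q p q < ε}}

namespace AQSel

variable {n Q : ℕ}

abbrev Tup (n Q : ℕ) := Fin Q → EuclideanSpace ℝ (Fin n)

/-- the ℓ² distance between two tuples (no permutation). -/
noncomputable def sq (A B : Tup n Q) : ℝ := Real.sqrt (∑ i, ‖A i - B i‖ ^ 2)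

theorem gdist_le_perm (A B : Tup n Q) (σ : Equiv.Perm (Fin Q)) :
    Gdist n Q A B ≤ Real.sqrt (∑ i, ‖A i - B (σ i)‖ ^ 2) :=
  Finset.inf'_le _ (Finset.mem_univ σ)

theorem gdist_le (A B : Tup n Q) : Gdist n Q A B ≤ sq A B :=
  gdist_le_perm A B (Equiv.refl _)

theorem le_gdist {c : ℝ} {A B : Tup n Q}
    (h : ∀ σ : Equiv.Perm (Fin Q), c ≤ Real.sqrt (∑ i, ‖A i - B (σ i)‖ ^ 2)) :
    c ≤ Gdist n Q A B :=
  Finset.le_inf' _ _ fun σ _ => h σ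

theorem gdist_nonneg (A B : Tup n Q) : 0 ≤ Gdist n Q A B :=
  le_gdist fun _ => Real.sqrt_nonneg _

theorem gdist_exists (A B : Tup n Q) :
    ∃ σ : Equiv.Perm (Fin Q), Gdist n Q A B = Real.sqrt (∑ i, ‖A i - B (σ i)‖ ^ 2) := by
  obtain ⟨σ, -, h⟩ := Finset.exists_mem_eq_inf' (s := (Finset.univ : Finset (Equiv.Perm (Fin Q))))
    Finset.univ_nonempty (fun σ => Real.sqrt (∑ i, ‖A i - B (σ i)‖ ^ 2))
  exact ⟨σ, h⟩

theorem gdist_comp_right (A B : Tup n Q) (τ : Equiv.Perm (Fin Q)) :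
    Gdist n Q A (fun i => B (τ i)) = Gdist n Q A B := by
  apply le_antisymm
  · apply le_gdist
    intro σ
    simpa using gdist_le_perm A (fun i => B (τ i)) (σ.trans τ.symm)
  · apply le_gdist
    intro σ
    simpa using gdist_le_perm A B (σ.trans τ)

theorem gdist_comp_left (A B : Tup n Q) (τ : Equiv.Perm (Fin Q)) :
    Gdist n Q (fun i => A (τ i)) B = Gdist n Q A B := by
  apply le_antisymm
  · apply le_gdist
    intro σ
    have h := gdist_le_perm (fun i => A (τ i)) B (τ.trans σ)
    have hs : ∑ i, ‖A (τ i) - B ((τ.trans σ) i)‖ ^ 2 = ∑ i, ‖A i - B (σ i)‖ ^ 2 :=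
      Equiv.sum_comp τ (fun j => ‖A j - B (σ j)‖ ^ 2)
    rwa [hs] at h
  · apply le_gdist
    intro σ
    have h := gdist_le_perm A B (τ.symm.trans σ)
    have hs : ∑ i, ‖A i - B ((τ.symm.trans σ) i)‖ ^ 2 = ∑ i, ‖A (τ i) - B (σ i)‖ ^ 2 := by
      rw [← Equiv.sum_comp τ (fun j => ‖A j - B ((τ.symm.trans σ) j)‖ ^ 2)]
      simp
    rwa [hs] at h

theorem gdist_symm (A B : Tup n Q) : Gdist n Q A B = Gdist n Q B A := by
  have key : ∀ C D : Tup n Q, Gdist n Q C D ≤ Gdist n Q D C := by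
    intro C D
    apply le_gdist
    intro σ
    have h := gdist_le_perm C D σ.symm
    have hs : ∑ i, ‖C i - D (σ.symm i)‖ ^ 2 = ∑ i, ‖D i - C (σ i)‖ ^ 2 := by
      rw [← Equiv.sum_comp σ (fun j => ‖C j - D (σ.symm j)‖ ^ 2)]
      simp [norm_sub_rev]
    rwa [hs] at h
  exact le_antisymm (key A B) (key B A)

theorem gdist_triangle (A B C : Tup n Q) :
    Gdist n Q A C ≤ Gdist n Q A B + Gdist n Q B C := by
  obtain ⟨σ, hσ⟩ := gdist_exists A B
  obtain ⟨τ, hτ⟩ := gdist_exists B C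
  have h1 : Gdist n Q A C ≤ Real.sqrt (∑ i, ‖A i - C (τ (σ i))‖ ^ 2) := by
    simpa using gdist_le_perm A C (σ.trans τ)
  refine h1.trans ?_
  rw [hσ, hτ]
  set u : PiLp 2 (fun _ : Fin Q => EuclideanSpace ℝ (Fin n)) := WithLp.toLp 2 (fun i => A i - B (σ i)) with hu
  set v : PiLp 2 (fun _ : Fin Q => EuclideanSpace ℝ (Fin n)) := WithLp.toLp 2 (fun i => B (σ i) - C (τ (σ i))) with hv
  have hsum : ∑ j, ‖B j - C (τ j)‖ ^ 2 = ∑ i, ‖B (σ i) - C (τ (σ i))‖ ^ 2 :=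
    (Equiv.sum_comp σ (fun j => ‖B j - C (τ j)‖ ^ 2)).symm
  rw [hsum]
  have h2 := norm_add_le u v
  rw [PiLp.norm_eq_of_L2, PiLp.norm_eq_of_L2, PiLp.norm_eq_of_L2] at h2
  have h3 : ∀ i, (u + v) i = A i - C (τ (σ i)) := by
    intro i
    simp [hu, hv, sub_add_sub_cancel]
  calc Real.sqrt (∑ i, ‖A i - C (τ (σ i))‖ ^ 2)
      = Real.sqrt (∑ i, ‖(u + v) i‖ ^ 2) := by
        congr 1
        exact Finset.sum_congr rfl fun i _ => by rw [h3 i]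
    _ ≤ Real.sqrt (∑ i, ‖u i‖ ^ 2) + Real.sqrt (∑ i, ‖v i‖ ^ 2) := h2
    _ = _ := rfl

theorem eq_of_gdist_eq_zero {A B : Tup n Q} (h : Gdist n Q A B = 0) :
    Quotient.mk (permSetoid n Q) A = Quotient.mk (permSetoid n Q) B := by
  obtain ⟨σ, hσ⟩ := gdist_exists A B
  rw [h] at hσ
  have hnn : (0:ℝ) ≤ ∑ i, ‖A i - B (σ i)‖ ^ 2 :=
    Finset.sum_nonneg fun i _ => sq_nonneg _
  have hsum : ∑ i, ‖A i - B (σ i)‖ ^ 2 = 0 := (Real.sqrt_eq_zero hnn).mp hσ.symm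
  apply Quotient.sound
  refine ⟨σ, fun i => ?_⟩
  have h1 : ‖A i - B (σ i)‖ ^ 2 = 0 :=
    (Finset.sum_eq_zero_iff_of_nonneg fun i _ => sq_nonneg _).mp hsum i (Finset.mem_univ i)
  have h2 : A i - B (σ i) = 0 := by
    have := (pow_eq_zero_iff two_ne_zero).mp h1
    exact norm_eq_zero.mp this
  exact sub_eq_zero.mp h2

theorem gdistQ_mk_mk (A B : Tup n Q) :
    GdistQ n Q (Quotient.mk (permSetoid n Q) A) (Quotient.mk (permSetoid n Q) B)
      = Gdist n Q A B := by
  obtain ⟨σ, hσ⟩ := Quotient.mk_out (s := permSetoid n Q) A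
  obtain ⟨τ, hτ⟩ := Quotient.mk_out (s := permSetoid n Q) B
  have hA : (Quotient.mk (permSetoid n Q) A).out = fun i => A (σ i) := funext hσ
  have hB : (Quotient.mk (permSetoid n Q) B).out = fun i => B (τ i) := funext hτ
  show Gdist n Q _ _ = _
  rw [hA, hB, gdist_comp_left, gdist_comp_right]

theorem gdistQ_mk_left (A : Tup n Q) (q : AQ n Q) :
    GdistQ n Q (Quotient.mk (permSetoid n Q) A) q = Gdist n Q A q.out := by
  conv_lhs => rw [← Quotient.out_eq q]
  rw [gdistQ_mk_mk]

end AQSel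
namespace AQSel

variable {n Q : ℕ}

/-- matching cost of permutation `σ` for a pair of tuples. -/
noncomputable def Dfun (n Q : ℕ) (σ : Equiv.Perm (Fin Q)) (p : Tup n Q × Tup n Q) : ℝ :=
  ∑ i, ‖p.1 i - p.2 (σ i)‖ ^ 2

theorem measurable_Dfun (σ : Equiv.Perm (Fin Q)) : Measurable (Dfun n Q σ) := by
  apply Finset.measurable_sum
  intro i _
  exact (((measurable_pi_apply i).comp measurable_fst).sub
    ((measurable_pi_apply (σ i)).comp measurable_snd)).norm.pow_const 2

/-- `σ` is a minimizing permutation for the pair `p`. -/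
def IsMin (σ : Equiv.Perm (Fin Q)) (p : Tup n Q × Tup n Q) : Prop :=
  ∀ τ, Dfun n Q σ p ≤ Dfun n Q τ p

theorem exists_isMin (p : Tup n Q × Tup n Q) : ∃ σ, IsMin σ p := by
  obtain ⟨σ, -, h⟩ := Finset.exists_min_image (Finset.univ : Finset (Equiv.Perm (Fin Q)))
    (fun σ => Dfun n Q σ p) ⟨1, Finset.mem_univ 1⟩
  exact ⟨σ, fun τ => h τ (Finset.mem_univ τ)⟩

open Classical in
/-- The canonical minimizing permutation: among minimizers, the one with least index
under a fixed enumeration of the permutation group. -/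
noncomputable def selPerm (p : Tup n Q × Tup n Q) : Equiv.Perm (Fin Q) :=
  (Fintype.equivFin (Equiv.Perm (Fin Q))).symm
    ((Finset.univ.filter
      (fun i => IsMin ((Fintype.equivFin (Equiv.Perm (Fin Q))).symm i) p)).min'
      (by
        obtain ⟨σ, hσ⟩ := exists_isMin p
        exact ⟨Fintype.equivFin (Equiv.Perm (Fin Q)) σ, by
          simp only [Finset.mem_filter, Finset.mem_univ, true_and, Equiv.symm_apply_apply]
          exact hσ⟩))

theorem selPerm_isMin (p : Tup n Q × Tup n Q) : IsMin (selPerm p) p := by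
  classical
  have h := Finset.min'_mem
    (Finset.univ.filter
      (fun i => IsMin ((Fintype.equivFin (Equiv.Perm (Fin Q))).symm i) p)) (by
        obtain ⟨σ, hσ⟩ := exists_isMin p
        exact ⟨Fintype.equivFin (Equiv.Perm (Fin Q)) σ, by
          simp only [Finset.mem_filter, Finset.mem_univ, true_and, Equiv.symm_apply_apply]
          exact hσ⟩)
  rw [Finset.mem_filter] at h
  exact h.2

theorem selPerm_min (p : Tup n Q × Tup n Q) (σ : Equiv.Perm (Fin Q)) (hσ : IsMin σ p) :
    Fintype.equivFin (Equiv.Perm (Fin Q)) (selPerm p) ≤ Fintype.equivFin (Equiv.Perm (Fin Q)) σ := by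
  classical
  have h := Finset.min'_le
    (Finset.univ.filter
      (fun i => IsMin ((Fintype.equivFin (Equiv.Perm (Fin Q))).symm i) p))
    (Fintype.equivFin (Equiv.Perm (Fin Q)) σ) (by
      simp only [Finset.mem_filter, Finset.mem_univ, true_and, Equiv.symm_apply_apply]
      exact hσ)
  simpa [selPerm] using h

theorem selPerm_eq_iff (p : Tup n Q × Tup n Q) (σ0 : Equiv.Perm (Fin Q)) :
    selPerm p = σ0 ↔ IsMin σ0 p ∧ ∀ σ, IsMin σ p →
      Fintype.equivFin (Equiv.Perm (Fin Q)) σ0 ≤ Fintype.equivFin (Equiv.Perm (Fin Q)) σ := by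
  constructor
  · rintro rfl
    exact ⟨selPerm_isMin p, fun σ hσ => selPerm_min p σ hσ⟩
  · rintro ⟨h1, h2⟩
    have ha := selPerm_min p σ0 h1
    have hb := h2 (selPerm p) (selPerm_isMin p)
    have := le_antisymm ha hb
    have := (Fintype.equivFin (Equiv.Perm (Fin Q))).injective this
    exact this

theorem measurableSet_isMin (σ : Equiv.Perm (Fin Q)) :
    MeasurableSet {p : Tup n Q × Tup n Q | IsMin σ p} := by
  have : {p : Tup n Q × Tup n Q | IsMin σ p}
      = ⋂ τ, {p | Dfun n Q σ p ≤ Dfun n Q τ p} := by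
    ext p; simp [IsMin]
  rw [this]
  exact MeasurableSet.iInter fun τ => measurableSet_le (measurable_Dfun σ) (measurable_Dfun τ)

theorem measurableSet_selPerm (σ0 : Equiv.Perm (Fin Q)) :
    MeasurableSet {p : Tup n Q × Tup n Q | selPerm p = σ0} := by
  have h : {p : Tup n Q × Tup n Q | selPerm p = σ0}
      = {p | IsMin σ0 p} ∩ ⋂ σ, {p | IsMin σ p →
          Fintype.equivFin (Equiv.Perm (Fin Q)) σ0 ≤ Fintype.equivFin (Equiv.Perm (Fin Q)) σ} := by
    ext p
    simp only [Set.mem_setOf_eq, Set.mem_inter_iff, Set.mem_iInter, selPerm_eq_iff]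
  rw [h]
  refine (measurableSet_isMin σ0).inter (MeasurableSet.iInter fun σ => ?_)
  by_cases hle : Fintype.equivFin (Equiv.Perm (Fin Q)) σ0 ≤ Fintype.equivFin (Equiv.Perm (Fin Q)) σ
  · have : {p : Tup n Q × Tup n Q | IsMin σ p →
        Fintype.equivFin (Equiv.Perm (Fin Q)) σ0 ≤ Fintype.equivFin (Equiv.Perm (Fin Q)) σ}
        = Set.univ := by
      ext p; simp [hle]
    rw [this]; exact MeasurableSet.univ
  · have : {p : Tup n Q × Tup n Q | IsMin σ p →
        Fintype.equivFin (Equiv.Perm (Fin Q)) σ0 ≤ Fintype.equivFin (Equiv.Perm (Fin Q)) σ}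
        = {p | IsMin σ p}ᶜ := by
      ext p; simp [hle]
    rw [this]; exact (measurableSet_isMin σ).compl

/-- Rearrange the second tuple by the optimal matching to the first. -/
noncomputable def Pmap (n Q : ℕ) (p : Tup n Q × Tup n Q) : Tup n Q :=
  fun j => p.2 (selPerm p j)

theorem measurable_Pmap : Measurable (Pmap n Q) := by
  intro B hB
  have h : Pmap n Q ⁻¹' B = ⋃ σ0, ({p : Tup n Q × Tup n Q | selPerm p = σ0}
      ∩ (fun p : Tup n Q × Tup n Q => (fun j => p.2 (σ0 j))) ⁻¹' B) := by
    ext p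
    simp only [Set.mem_preimage, Set.mem_iUnion, Set.mem_inter_iff, Set.mem_setOf_eq]
    constructor
    · intro hp
      exact ⟨selPerm p, rfl, hp⟩
    · rintro ⟨σ0, h1, h2⟩
      show Pmap n Q p ∈ B
      have : Pmap n Q p = fun j => p.2 (σ0 j) := by
        funext j; rw [Pmap, h1]
      rw [this]; exact h2
  rw [h]
  refine MeasurableSet.iUnion fun σ0 => (measurableSet_selPerm σ0).inter ?_
  exact (measurable_pi_lambda _ fun j => (measurable_pi_apply (σ0 j)).comp measurable_snd) hB

theorem sq_Pmap (a b : Tup n Q) : sq a (Pmap n Q (a, b)) = Gdist n Q a b := by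
  have hmin := selPerm_isMin (a, b)
  apply le_antisymm
  · apply le_gdist
    intro σ
    have h1 : (∑ i, ‖a i - Pmap n Q (a, b) i‖ ^ 2) ≤ ∑ i, ‖a i - b (σ i)‖ ^ 2 := hmin σ
    exact Real.sqrt_le_sqrt h1
  · exact gdist_le_perm a b (selPerm (a, b))

theorem mk_Pmap (a b : Tup n Q) :
    Quotient.mk (permSetoid n Q) (Pmap n Q (a, b)) = Quotient.mk (permSetoid n Q) b :=
  Quotient.sound ⟨selPerm (a, b), fun i => rfl⟩

theorem coord_le_sq (A B : Tup n Q) (j : Fin Q) : ‖A j - B j‖ ≤ sq A B := by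
  rw [← Real.sqrt_sq (norm_nonneg (A j - B j))]
  exact Real.sqrt_le_sqrt (Finset.single_le_sum (f := fun i => ‖A i - B i‖ ^ 2)
    (fun i _ => sq_nonneg _) (Finset.mem_univ j))

theorem exists_dense_seq_gdist :
    ∃ u : ℕ → Tup n Q, ∀ (A : Tup n Q) (ε : ℝ), 0 < ε → ∃ i, Gdist n Q (u i) A < ε := by
  obtain ⟨u, hu⟩ := TopologicalSpace.exists_dense_seq (Tup n Q)
  refine ⟨u, fun A ε hε => ?_⟩
  set s : ℝ := Real.sqrt Q with hs
  have hs0 : 0 ≤ s := Real.sqrt_nonneg _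
  set r : ℝ := ε / (s + 1) with hr
  have hrpos : 0 < r := div_pos hε (by positivity)
  obtain ⟨i, hi⟩ := Metric.denseRange_iff.mp hu A r hrpos
  refine ⟨i, lt_of_le_of_lt (gdist_le _ _) ?_⟩
  have hb : ∀ j, ‖u i j - A j‖ ≤ r := by
    intro j
    have h1 : dist (u i j) (A j) ≤ dist (u i) A := dist_le_pi_dist (u i) A j
    rw [dist_comm (u i) A] at h1
    calc ‖u i j - A j‖ = dist (u i j) (A j) := (dist_eq_norm _ _).symm
      _ ≤ dist A (u i) := h1
      _ ≤ r := le_of_lt hi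
  have hsum : ∑ j, ‖u i j - A j‖ ^ 2 ≤ (Q : ℝ) * r ^ 2 := by
    calc ∑ j, ‖u i j - A j‖ ^ 2 ≤ ∑ _j : Fin Q, r ^ 2 :=
          Finset.sum_le_sum fun j _ =>
            pow_le_pow_left₀ (norm_nonneg _) (hb j) 2
      _ = (Q : ℝ) * r ^ 2 := by
          simp [Finset.sum_const, Finset.card_fin, nsmul_eq_mul]
  calc sq (u i) A ≤ Real.sqrt ((Q : ℝ) * r ^ 2) := Real.sqrt_le_sqrt hsum
    _ = s * r := by
        rw [Real.sqrt_mul (Nat.cast_nonneg Q), Real.sqrt_sq (le_of_lt hrpos)]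
    _ < ε := by
        rw [hr, ← mul_div_assoc, div_lt_iff₀ (by positivity : (0:ℝ) < s + 1)]
        nlinarith

end AQSel

open AQSel Filter in
/-- Every measurable `Q`-valued map `f : ℝᵐ → A_Q(ℝⁿ)` admits a measurable selection
`f = {f₁, …, f_Q}` almost everywhere. -/
theorem statement1 (m n Q : ℕ) (hm : 1 ≤ m) (hn : 1 ≤ n) (hQ : 1 ≤ Q)
    (f : EuclideanSpace ℝ (Fin m) → AQ n Q)
    (hf : @Measurable _ _ _ (AQBorel n Q) f) :
    ∃ g : Fin Q → EuclideanSpace ℝ (Fin m) → EuclideanSpace ℝ (Fin n),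
      (∀ j, Measurable (g j)) ∧
      ∀ᵐ x ∂(volume : Measure (EuclideanSpace ℝ (Fin m))),
        f x = Quotient.mk (permSetoid n Q) (fun j => g j x) := by
  classical
  obtain ⟨u, hu⟩ := exists_dense_seq_gdist (n := n) (Q := Q)
  -- the approximating step functions
  have hex : ∀ (k : ℕ) (x : EuclideanSpace ℝ (Fin m)),
      ∃ i, Gdist n Q (u i) ((f x).out) < (1/2 : ℝ) ^ k :=
    fun k x => hu ((f x).out) _ (by positivity)
  have hmeasP : ∀ k i, MeasurableSet {x : EuclideanSpace ℝ (Fin m) |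
      Gdist n Q (u i) ((f x).out) < (1/2 : ℝ) ^ k} := by
    intro k i
    have hgen : MeasurableSet[AQBorel n Q]
        {q | GdistQ n Q (Quotient.mk (permSetoid n Q) (u i)) q < (1/2 : ℝ) ^ k} :=
      MeasurableSpace.measurableSet_generateFrom ⟨_, _, rfl⟩
    have h2 := hf hgen
    have h3 : f ⁻¹' {q | GdistQ n Q (Quotient.mk (permSetoid n Q) (u i)) q < (1/2 : ℝ) ^ k}
        = {x | Gdist n Q (u i) ((f x).out) < (1/2 : ℝ) ^ k} := by
      ext x
      simp only [Set.mem_preimage, Set.mem_setOf_eq, gdistQ_mk_left]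
    rwa [h3] at h2
  set h : ℕ → EuclideanSpace ℝ (Fin m) → Tup n Q :=
    fun k x => u (Nat.find (hex k x)) with hh
  have h_meas : ∀ k, Measurable (h k) := by
    intro k
    exact Measurable.find (f := fun i _ => u i) (fun i => measurable_const) (hmeasP k) (hex k)
  have h_err : ∀ k x, Gdist n Q (h k x) ((f x).out) < (1/2 : ℝ) ^ k :=
    fun k x => Nat.find_spec (hex k x)
  -- the matched sequence
  set g : ℕ → EuclideanSpace ℝ (Fin m) → Tup n Q :=
    fun k => Nat.rec (h 0) (fun k gk x => Pmap n Q (gk x, h (k+1) x)) k with hgdef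
  have g_zero : g 0 = h 0 := rfl
  have g_succ : ∀ k x, g (k+1) x = Pmap n Q (g k x, h (k+1) x) := fun k x => rfl
  have g_meas : ∀ k, Measurable (g k) := by
    intro k
    induction k with
    | zero => exact h_meas 0
    | succ k ih =>
      have : g (k+1) = fun x => Pmap n Q (g k x, h (k+1) x) := funext fun x => g_succ k x
      rw [this]
      exact measurable_Pmap.comp (ih.prodMk (h_meas (k+1)))
  have g_cls : ∀ k x, Quotient.mk (permSetoid n Q) (g k x) = Quotient.mk (permSetoid n Q) (h k x) := by
    intro k x
    induction k with
    | zero => rfl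
    | succ k _ =>
      rw [g_succ k x]
      exact mk_Pmap (g k x) (h (k+1) x)
  have g_err : ∀ k x, Gdist n Q (g k x) ((f x).out) < (1/2 : ℝ) ^ k := by
    intro k x
    obtain ⟨σ, hσ⟩ := Quotient.exact (g_cls k x)
    have hg : g k x = fun i => h k x (σ i) := funext hσ
    rw [hg, gdist_comp_left]
    exact h_err k x
  have g_step : ∀ k x, sq (g k x) (g (k+1) x) ≤ 2 * (1/2 : ℝ) ^ k := by
    intro k x
    rw [g_succ k x, sq_Pmap]
    have h1 : Gdist n Q (g k x) (h (k+1) x)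
        ≤ Gdist n Q (g k x) ((f x).out) + Gdist n Q ((f x).out) (h (k+1) x) :=
      gdist_triangle _ _ _
    have h2 : Gdist n Q ((f x).out) (h (k+1) x) < (1/2 : ℝ) ^ (k+1) := by
      rw [gdist_symm]; exact h_err (k+1) x
    have h3 : ((1:ℝ)/2) ^ (k+1) ≤ (1/2 : ℝ) ^ k := by
      apply pow_le_pow_of_le_one <;> norm_num
    nlinarith [g_err k x]
  -- pointwise limits
  have hcauchy : ∀ x, CauchySeq (fun k => g k x) := by
    intro x
    apply cauchySeq_of_le_geometric (1/2 : ℝ) 2 (by norm_num)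
    intro k
    rw [dist_pi_le_iff (by positivity)]
    intro j
    rw [dist_eq_norm]
    exact (coord_le_sq (g k x) (g (k+1) x) j).trans (g_step k x)
  have hlim : ∀ x, ∃ l : Tup n Q, Tendsto (fun k => g k x) atTop (nhds l) :=
    fun x => cauchySeq_tendsto_of_complete (hcauchy x)
  set φ : EuclideanSpace ℝ (Fin m) → Tup n Q := fun x => (hlim x).choose with hφdef
  have hφ : ∀ x, Tendsto (fun k => g k x) atTop (nhds (φ x)) := fun x => (hlim x).choose_spec
  have φ_meas : Measurable φ :=
    measurable_of_tendsto_metrizable g_meas (tendsto_pi_nhds.mpr hφ)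
  refine ⟨fun j x => φ x j, fun j => (measurable_pi_apply j).comp φ_meas, ?_⟩
  apply ae_of_all
  intro x
  have key : Gdist n Q ((f x).out) (φ x) = 0 := by
    refine le_antisymm ?_ (gdist_nonneg _ _)
    have h1 : ∀ k, Gdist n Q ((f x).out) (φ x) ≤ (1/2 : ℝ) ^ k + sq (g k x) (φ x) := by
      intro k
      have ht : Gdist n Q ((f x).out) (φ x)
          ≤ Gdist n Q ((f x).out) (g k x) + Gdist n Q (g k x) (φ x) := gdist_triangle _ _ _
      have ha : Gdist n Q ((f x).out) (g k x) ≤ (1/2 : ℝ) ^ k := by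
        rw [gdist_symm]; exact le_of_lt (g_err k x)
      have hb : Gdist n Q (g k x) (φ x) ≤ sq (g k x) (φ x) := gdist_le _ _
      linarith
    have h2 : Tendsto (fun k => (1/2 : ℝ) ^ k + sq (g k x) (φ x)) atTop (nhds 0) := by
      have h2a : Tendsto (fun k => (1/2 : ℝ) ^ k) atTop (nhds 0) :=
        tendsto_pow_atTop_nhds_zero_of_lt_one (by norm_num) (by norm_num)
      have h2b : Tendsto (fun k => sq (g k x) (φ x)) atTop (nhds 0) := by
        have hsum : Tendsto (fun k => ∑ j, ‖g k x j - φ x j‖ ^ 2) atTop (nhds 0) := by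
          have hz : (0:ℝ) = ∑ _j : Fin Q, (0:ℝ) := by simp
          rw [hz]
          apply tendsto_finset_sum
          intro j _
          have hcj : Tendsto (fun k => g k x j) atTop (nhds (φ x j)) :=
            ((continuous_apply j).tendsto (φ x)).comp (hφ x)
          have hcont : Continuous fun y : EuclideanSpace ℝ (Fin n) => ‖y - φ x j‖ ^ 2 :=
            ((continuous_id.sub continuous_const).norm).pow 2
          have := (hcont.tendsto (φ x j)).comp hcj
          simpa [Function.comp_def] using this
        have hsq := (Real.continuous_sqrt.tendsto 0).comp hsum
        simpa [AQSel.sq, Function.comp_def] using hsq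
      have := h2a.add h2b
      simpa using this
    exact ge_of_tendsto' h2 h1
  have hfinal := eq_of_gdist_eq_zero key
  calc f x = (show AQ n Q from Quotient.mk (permSetoid n Q) ((f x).out)) := (Quotient.out_eq (f x)).symm
    _ = (show AQ n Q from Quotient.mk (permSetoid n Q) (φ x)) := hfinal
    _ = (show AQ n Q from Quotient.mk (permSetoid n Q) (fun j => φ x j)) := rfl
end

section
/- Let A ⊆ ℝ^m be a measurable set and F : A → A_Q(ℝ^n) a Lipschitz map with respect to the metric G. Then there exist a countable partition of A into bounded measurable subsets A_i (i ∈ ℕ) and Lipschitz functions f_i^j : A_i → ℝ^n for j ∈ {1,…,Q} such that: (a) for every i ∈ ℕ and every x ∈ A_i, F(x) equals the unordered Q-tuple {f_i^1(x),…,f_i^Q(x)}, and Lip(f_i^j) ≤ Lip(F) for all i,j; (b) for every i and every pair j, j' ∈ {1,…,Q}, either f_i^j coincides with f_i^{j'} on all of A_i, or f_i^j(x) ≠ f_i^{j'}(x) for every x ∈ A_i. -/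
open MeasureTheory
open scoped BigOperators NNReal

namespace QV

variable {n Q : ℕ}

abbrev V (n : ℕ) := EuclideanSpace ℝ (Fin n)

lemma gdist_le (P S : Fin Q → V n) (σ : Equiv.Perm (Fin Q)) :
    Gdist n Q P S ≤ Real.sqrt (∑ i, ‖P i - S (σ i)‖ ^ 2) :=
  Finset.inf'_le _ (Finset.mem_univ σ)

lemma gdist_exists (P S : Fin Q → V n) :
    ∃ σ : Equiv.Perm (Fin Q), Gdist n Q P S = Real.sqrt (∑ i, ‖P i - S (σ i)‖ ^ 2) := by
  obtain ⟨σ, -, h⟩ := Finset.exists_mem_eq_inf' (Finset.univ_nonempty)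
    (fun σ : Equiv.Perm (Fin Q) => Real.sqrt (∑ i, ‖P i - S (σ i)‖ ^ 2))
  exact ⟨σ, h⟩

lemma gdist_nonneg (P S : Fin Q → V n) : 0 ≤ Gdist n Q P S := by
  obtain ⟨σ, h⟩ := gdist_exists P S
  rw [h]; exact Real.sqrt_nonneg _

lemma norm_le_sqrt_sum (P S : Fin Q → V n) (σ : Equiv.Perm (Fin Q)) (i : Fin Q) :
    ‖P i - S (σ i)‖ ≤ Real.sqrt (∑ j, ‖P j - S (σ j)‖ ^ 2) := by
  have h1 : ‖P i - S (σ i)‖ ^ 2 ≤ ∑ j, ‖P j - S (σ j)‖ ^ 2 :=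
    Finset.single_le_sum (f := fun j => ‖P j - S (σ j)‖ ^ 2)
      (fun j _ => sq_nonneg _) (Finset.mem_univ i)
  calc ‖P i - S (σ i)‖ = Real.sqrt (‖P i - S (σ i)‖ ^ 2) :=
        (Real.sqrt_sq (norm_nonneg _)).symm
    _ ≤ _ := Real.sqrt_le_sqrt h1

/-- there is a minimizing permutation which in addition bounds each pair distance. -/
lemma gdist_exists_pointwise (P S : Fin Q → V n) :
    ∃ σ : Equiv.Perm (Fin Q), Gdist n Q P S = Real.sqrt (∑ i, ‖P i - S (σ i)‖ ^ 2) ∧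
      ∀ i, ‖P i - S (σ i)‖ ≤ Gdist n Q P S := by
  obtain ⟨σ, h⟩ := gdist_exists P S
  exact ⟨σ, h, fun i => by rw [h]; exact norm_le_sqrt_sum P S σ i⟩

lemma gdist_comm_le (P S : Fin Q → V n) : Gdist n Q P S ≤ Gdist n Q S P := by
  obtain ⟨σ, h⟩ := gdist_exists S P
  have key : ∑ i, ‖P i - S (σ.symm i)‖ ^ 2 = ∑ i, ‖S i - P (σ i)‖ ^ 2 := by
    rw [← Equiv.sum_comp σ (fun i => ‖P i - S (σ.symm i)‖ ^ 2)]
    refine Finset.sum_congr rfl fun i _ => ?_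
    rw [Equiv.symm_apply_apply, norm_sub_rev]
  calc Gdist n Q P S ≤ Real.sqrt (∑ i, ‖P i - S (σ.symm i)‖ ^ 2) := gdist_le P S σ.symm
    _ = Gdist n Q S P := by rw [key, ← h]

lemma gdist_comm (P S : Fin Q → V n) : Gdist n Q P S = Gdist n Q S P :=
  le_antisymm (gdist_comm_le P S) (gdist_comm_le S P)

lemma gdist_comp_right_le (P S : Fin Q → V n) (τ : Equiv.Perm (Fin Q)) :
    Gdist n Q P (S ∘ τ) ≤ Gdist n Q P S := by
  obtain ⟨σ, h⟩ := gdist_exists P S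
  calc Gdist n Q P (S ∘ τ) ≤ Real.sqrt (∑ i, ‖P i - (S ∘ τ) ((σ.trans τ.symm) i)‖ ^ 2) :=
        gdist_le P (S ∘ τ) (σ.trans τ.symm)
    _ = Gdist n Q P S := by
        rw [h]
        congr 1
        refine Finset.sum_congr rfl fun i _ => ?_
        simp [Equiv.trans]

lemma gdist_comp_right (P S : Fin Q → V n) (τ : Equiv.Perm (Fin Q)) :
    Gdist n Q P (S ∘ τ) = Gdist n Q P S := by
  refine le_antisymm (gdist_comp_right_le P S τ) ?_
  have := gdist_comp_right_le P (S ∘ τ) τ.symm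
  have h2 : (S ∘ τ) ∘ τ.symm = S := by ext i; simp
  rwa [h2] at this

lemma gdist_comp_left (P S : Fin Q → V n) (τ : Equiv.Perm (Fin Q)) :
    Gdist n Q (P ∘ τ) S = Gdist n Q P S := by
  rw [gdist_comm, gdist_comp_right, gdist_comm]

lemma gdist_congr_left {P P' : Fin Q → V n} (S : Fin Q → V n)
    (h : (permSetoid n Q).r P P') : Gdist n Q P S = Gdist n Q P' S := by
  obtain ⟨σ, hσ⟩ := h
  have : P = P' ∘ σ := funext hσ
  rw [this, gdist_comp_left]

lemma gdistQ_mk (P S : Fin Q → V n) :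
    GdistQ n Q (Quotient.mk (permSetoid n Q) P) (Quotient.mk (permSetoid n Q) S) =
      Gdist n Q P S := by
  unfold GdistQ
  have h1 : (permSetoid n Q).r (Quotient.mk (permSetoid n Q) P).out P :=
    Quotient.mk_out (s := permSetoid n Q) P
  have h2 : (permSetoid n Q).r (Quotient.mk (permSetoid n Q) S).out S :=
    Quotient.mk_out (s := permSetoid n Q) S
  rw [gdist_congr_left _ h1, gdist_comm, gdist_congr_left _ h2, gdist_comm]

lemma gdistQ_eq_out (x y : AQ n Q) : GdistQ n Q x y = Gdist n Q x.out y.out := rfl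


noncomputable def diamt (P : Fin Q → V n) : ℝ≥0 :=
  Finset.univ.sup (fun p : Fin Q × Fin Q => ‖P p.1 - P p.2‖₊)

lemma le_diamt (P : Fin Q → V n) (i j : Fin Q) : ‖P i - P j‖ ≤ (diamt P : ℝ) := by
  have := Finset.le_sup (f := fun p : Fin Q × Fin Q => ‖P p.1 - P p.2‖₊)
    (Finset.mem_univ (i, j))
  exact_mod_cast this

lemma diamt_eq_zero {P : Fin Q → V n} (h : diamt P = 0) (i j : Fin Q) : P i = P j := by
  have h1 := le_diamt P i j
  rw [h] at h1
  have h2 : ‖P i - P j‖ = 0 := le_antisymm (by simpa using h1) (norm_nonneg _)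
  exact sub_eq_zero.mp (norm_eq_zero.mp h2)

lemma diamt_exists (hQ : 0 < Q) (P : Fin Q → V n) :
    ∃ i j : Fin Q, (diamt P : ℝ) = ‖P i - P j‖ := by
  haveI : Nonempty (Fin Q) := ⟨⟨0, hQ⟩⟩
  have hne : (Finset.univ : Finset (Fin Q × Fin Q)).Nonempty := Finset.univ_nonempty
  obtain ⟨p, -, hp⟩ := Finset.exists_mem_eq_sup Finset.univ hne
    (fun p : Fin Q × Fin Q => ‖P p.1 - P p.2‖₊)
  refine ⟨p.1, p.2, ?_⟩
  rw [diamt, hp]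
  simp

lemma diamt_le_of_close (hQ : 0 < Q) {P S : Fin Q → V n} {σ : Equiv.Perm (Fin Q)} {δ : ℝ}
    (hσ : ∀ i, ‖P i - S (σ i)‖ ≤ δ) : (diamt P : ℝ) ≤ (diamt S : ℝ) + 2 * δ := by
  obtain ⟨i, j, hij⟩ := diamt_exists hQ P
  rw [hij]
  have t1 : ‖P i - P j‖ ≤ ‖P i - S (σ i)‖ + ‖S (σ i) - P j‖ :=
    norm_sub_le_norm_sub_add_norm_sub _ _ _
  have t2 : ‖S (σ i) - P j‖ ≤ ‖S (σ i) - S (σ j)‖ + ‖S (σ j) - P j‖ :=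
    norm_sub_le_norm_sub_add_norm_sub _ _ _
  have h3 := le_diamt S (σ i) (σ j)
  have h4 : ‖S (σ j) - P j‖ = ‖P j - S (σ j)‖ := norm_sub_rev _ _
  have h5 := hσ i
  have h6 := hσ j
  linarith


lemma cluster_lemma (hQ : 0 < Q) (P : Fin Q → V n) (hd : 0 < (diamt P : ℝ)) :
    ∃ (S : Finset (Fin Q)) (ε : ℝ), 0 < ε ∧ S.Nonempty ∧ S ≠ Finset.univ ∧
      ∀ i ∈ S, ∀ j ∉ S, ε ≤ ‖P i - P j‖ := by
  classical
  haveI : Nonempty (Fin Q) := ⟨⟨0, hQ⟩⟩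
  obtain ⟨i0, i1, hd01⟩ := diamt_exists hQ P
  set d : ℝ := (diamt P : ℝ) with hdd
  set r : Fin Q → ℝ := fun i => ‖P i - P i0‖ with hr
  set ε : ℝ := d / Q with hε
  have hQR : (0 : ℝ) < Q := by exact_mod_cast hQ
  have hεpos : 0 < ε := div_pos hd hQR
  have hQε : (Q : ℝ) * ε = d := by
    rw [hε]; field_simp
  have hri0 : r i0 = 0 := by simp [hr]
  have hgap : ∃ k : Fin Q, ∀ i, r i ∉ Set.Ioc (((k : ℕ) : ℝ) * ε) (((k : ℕ) + 1 : ℝ) * ε) := by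
    by_contra hcon
    push_neg at hcon
    choose φ hφ using hcon
    have hinj : Set.InjOn φ ((Finset.univ : Finset (Fin Q)) : Set (Fin Q)) := by
      intro a _ b _ hab
      obtain ⟨ha1, ha2⟩ := hφ a
      have hb' := hφ b
      rw [← hab] at hb'
      obtain ⟨hb1, hb2⟩ := hb'
      have h1 : ((a : ℕ) : ℝ) * ε < (((b : ℕ) : ℝ) + 1) * ε := lt_of_lt_of_le ha1 hb2
      have h2 : ((b : ℕ) : ℝ) * ε < (((a : ℕ) : ℝ) + 1) * ε := lt_of_lt_of_le hb1 ha2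
      have h1' : ((a : ℕ) : ℝ) < ((b : ℕ) : ℝ) + 1 := lt_of_mul_lt_mul_right (by linarith) hεpos.le
      have h2' : ((b : ℕ) : ℝ) < ((a : ℕ) : ℝ) + 1 := lt_of_mul_lt_mul_right (by linarith) hεpos.le
      have h1'' : (a : ℕ) < (b : ℕ) + 1 := by exact_mod_cast h1'
      have h2'' : (b : ℕ) < (a : ℕ) + 1 := by exact_mod_cast h2'
      have : (a : ℕ) = (b : ℕ) := by omega
      exact Fin.ext this
    have hmaps : ∀ a ∈ (Finset.univ : Finset (Fin Q)), φ a ∈ Finset.univ.erase i0 := by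
      intro a _
      refine Finset.mem_erase.mpr ⟨?_, Finset.mem_univ _⟩
      intro hcontra
      obtain ⟨ha1, -⟩ := hφ a
      rw [hcontra, hri0] at ha1
      have : (0:ℝ) ≤ ((a : ℕ) : ℝ) * ε := mul_nonneg (Nat.cast_nonneg _) hεpos.le
      linarith
    have hcard := Finset.card_le_card_of_injOn φ hmaps hinj
    rw [Finset.card_univ, Fintype.card_fin, Finset.card_erase_of_mem (Finset.mem_univ _),
      Finset.card_univ, Fintype.card_fin] at hcard
    omega
  obtain ⟨k, hk⟩ := hgap
  set t : ℝ := ((k : ℕ) : ℝ) * ε with ht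
  have htnn : 0 ≤ t := mul_nonneg (Nat.cast_nonneg _) hεpos.le
  refine ⟨Finset.univ.filter (fun i => r i ≤ t), ε, hεpos, ?_, ?_, ?_⟩
  · exact ⟨i0, Finset.mem_filter.mpr ⟨Finset.mem_univ _, by rw [hri0]; exact htnn⟩⟩
  · intro hcontra
    have hi1 : i1 ∈ Finset.univ.filter (fun i => r i ≤ t) := by
      rw [hcontra]; exact Finset.mem_univ i1
    have hri1 : r i1 = d := by
      show ‖P i1 - P i0‖ = d
      rw [norm_sub_rev, ← hd01]
    have hklt : ((k : ℕ) : ℝ) < (Q : ℝ) := by exact_mod_cast k.isLt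
    have : t < d := by
      calc t = ((k : ℕ) : ℝ) * ε := ht
        _ < (Q : ℝ) * ε := by exact mul_lt_mul_of_pos_right hklt hεpos
        _ = d := hQε
    linarith [hri1 ▸ (Finset.mem_filter.mp hi1).2]
  · intro i hi j hj
    have hri : r i ≤ t := (Finset.mem_filter.mp hi).2
    have hrj : ¬ r j ≤ t := fun hc => hj (Finset.mem_filter.mpr ⟨Finset.mem_univ _, hc⟩)
    push_neg at hrj
    have hrj2 : ¬ r j ∈ Set.Ioc t (((k : ℕ) + 1 : ℝ) * ε) := hk j
    have hrj3 : (((k : ℕ) : ℝ) + 1) * ε < r j := by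
      by_contra hc
      push_neg at hc
      exact hrj2 ⟨hrj, by exact_mod_cast hc⟩
    have htriangle : r j ≤ r i + ‖P i - P j‖ := by
      have := norm_sub_le_norm_sub_add_norm_sub (P j) (P i) (P i0)
      show ‖P j - P i0‖ ≤ ‖P i - P i0‖ + ‖P i - P j‖
      rw [norm_sub_rev (P j) (P i)] at this
      linarith
    have : t + ε ≤ (((k : ℕ) : ℝ) + 1) * ε := by rw [ht]; ring_nf; linarith
    linarith

abbrev X (m : ℕ) := EuclideanSpace ℝ (Fin m)

variable {m : ℕ}

/-- A decomposition of `A` adapted to `F` with constant `L`, indexed by `ι`. -/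
def Dec (A : Set (X m)) (F : X m → AQ n Q) (L : ℝ≥0) {ι : Type}
    (B : ι → Set (X m)) (f : ι → Fin Q → X m → V n) : Prop :=
  (∀ i, MeasurableSet (B i)) ∧ Pairwise (Function.onFun Disjoint B) ∧ (⋃ i, B i) = A ∧
  (∀ i j, LipschitzOnWith L (f i j) (B i)) ∧
  (∀ i, ∀ x ∈ B i, F x = Quotient.mk (permSetoid n Q) fun j => f i j x)

def ExDec (A : Set (X m)) (F : X m → AQ n Q) (L : ℝ≥0) : Prop :=
  ∃ (B : ℕ → Set (X m)) (f : ℕ → Fin Q → X m → V n), Dec A F L B f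

lemma dec_empty (F : X m → AQ n Q) (L : ℝ≥0) :
    Dec (∅ : Set (X m)) F L (fun _ : ℕ => (∅ : Set (X m))) (fun _ _ _ => 0) := by
  refine ⟨fun _ => MeasurableSet.empty, ?_, by simp, fun _ _ => lipschitzOnWith_empty _ _,
    fun i x hx => absurd hx (Set.notMem_empty x)⟩
  intro a b hab
  simp [Function.onFun]

lemma exdec_reindex {ι : Type} [Encodable ι] {A : Set (X m)} {F : X m → AQ n Q} {L : ℝ≥0}
    (B : ι → Set (X m)) (f : ι → Fin Q → X m → V n) (h : Dec A F L B f) :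
    ExDec A F L := by
  classical
  obtain ⟨hmeas, hdisj, hunion, hlip, hrep⟩ := h
  refine ⟨fun k => (Encodable.decode₂ ι k).elim ∅ B,
    fun k => (Encodable.decode₂ ι k).elim (fun _ _ => 0) f, ?_, ?_, ?_, ?_, ?_⟩
  · intro k
    cases hd : Encodable.decode₂ ι k with
    | none => simp [hd]
    | some i => simp [hd, hmeas i]
  · intro a b hab
    cases hda : Encodable.decode₂ ι a with
    | none => simp [Function.onFun, hda]
    | some i =>
      cases hdb : Encodable.decode₂ ι b with
      | none => simp [Function.onFun, hdb]
      | some i' =>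
        have hii' : i ≠ i' := by
          intro hc
          subst hc
          exact hab ((Encodable.mem_decode₂.mp hda).symm.trans (Encodable.mem_decode₂.mp hdb))
        simpa [Function.onFun, hda, hdb] using hdisj hii'
  · apply Set.eq_of_subset_of_subset
    · intro x hx
      obtain ⟨k, hk⟩ := Set.mem_iUnion.mp hx
      cases hd : Encodable.decode₂ ι k with
      | none => rw [hd] at hk; simp at hk
      | some i =>
        rw [hd] at hk
        rw [← hunion]
        exact Set.mem_iUnion.mpr ⟨i, hk⟩
    · intro x hx
      rw [← hunion] at hx
      obtain ⟨i, hi⟩ := Set.mem_iUnion.mp hx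
      refine Set.mem_iUnion.mpr ⟨Encodable.encode i, ?_⟩
      rw [Encodable.decode₂_encode]
      exact hi
  · intro k j
    cases hd : Encodable.decode₂ ι k with
    | none => simp only [hd, Option.elim]; exact lipschitzOnWith_empty _ _
    | some i => simp only [hd, Option.elim]; exact hlip i j
  · intro k x hx
    simp only at hx ⊢
    cases hd : Encodable.decode₂ ι k with
    | none => rw [hd] at hx; simp at hx
    | some i =>
      rw [hd] at hx
      simpa using hrep i x hx

lemma exdec_mono_piece {A A' : Set (X m)} {F : X m → AQ n Q} {L : ℝ≥0}
    (h : ExDec A F L) (hA' : MeasurableSet A') : ExDec (A ∩ A') F L := by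
  obtain ⟨B, f, hmeas, hdisj, hunion, hlip, hrep⟩ := h
  refine ⟨fun k => B k ∩ A', f, fun k => (hmeas k).inter hA', ?_, ?_, ?_, ?_⟩
  · intro a b hab
    exact ((hdisj hab).mono (Set.inter_subset_left) (Set.inter_subset_left))
  · rw [← Set.iUnion_inter, hunion]
  · intro i j
    exact (hlip i j).mono Set.inter_subset_left
  · intro i x hx
    exact hrep i x hx.1

lemma exdec_assemble {A A0 : Set (X m)} {F : X m → AQ n Q} {L : ℝ≥0}
    (hA0sub : A0 ⊆ A) (hA0m : MeasurableSet A0)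
    (D0 : ExDec A0 F L)
    (hloc : ∀ x ∈ A \ A0, ∃ r : ℝ, 0 < r ∧ ExDec (A ∩ Metric.ball x r) F L) :
    ExDec A F L := by
  classical
  set 𝒰 : Set (Set (X m)) :=
    {u | ∃ x ∈ A \ A0, ∃ rr : ℝ, 0 < rr ∧ u = Metric.ball x rr ∧ ExDec (A ∩ u) F L} with h𝒰
  have hopen : ∀ u ∈ 𝒰, IsOpen u := by
    rintro u ⟨x, -, rr, -, rfl, -⟩
    exact Metric.isOpen_ball
  have hcover : A \ A0 ⊆ ⋃₀ 𝒰 := by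
    intro x hx
    obtain ⟨r, hr, hd⟩ := hloc x hx
    refine Set.mem_sUnion.mpr ⟨Metric.ball x r, ⟨x, hx, r, hr, rfl, hd⟩, Metric.mem_ball_self hr⟩
  obtain ⟨T, hTc, hTsub, hTun⟩ := TopologicalSpace.isOpen_sUnion_countable 𝒰 hopen
  have hTc' : (insert (∅ : Set (X m)) T).Countable := hTc.insert _
  obtain ⟨g, hg⟩ := hTc'.exists_eq_range ⟨∅, Set.mem_insert _ _⟩
  have hgmem : ∀ k, g k ∈ insert (∅ : Set (X m)) T := by
    intro k; rw [hg]; exact Set.mem_range_self k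
  have hgood : ∀ k, IsOpen (g k) ∧ ExDec (A ∩ g k) F L := by
    intro k
    rcases hgmem k with h | h
    · rw [h]
      exact ⟨isOpen_empty, by rw [Set.inter_empty]; exact ⟨_, _, dec_empty F L⟩⟩
    · have := hTsub h
      obtain ⟨x, -, rr, -, hu, hd⟩ := this
      exact ⟨hu ▸ Metric.isOpen_ball, hd⟩
  have hcover2 : A \ A0 ⊆ ⋃ k, g k := by
    intro x hx
    have := hcover hx
    rw [← hTun] at this
    obtain ⟨u, hu, hxu⟩ := this
    have : u ∈ Set.range g := by rw [← hg]; exact Set.mem_insert_of_mem _ hu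
    obtain ⟨k, rfl⟩ := this
    exact Set.mem_iUnion.mpr ⟨k, hxu⟩
  -- disjointified sets
  set E : ℕ → Set (X m) := fun k => g k \ (A0 ∪ ⋃ (l : ℕ) (_ : l < k), g l) with hE
  have hEm : ∀ k, MeasurableSet (E k) := by
    intro k
    exact ((hgood k).1.measurableSet).diff
      (hA0m.union (MeasurableSet.iUnion fun l => MeasurableSet.iUnion fun _ =>
        (hgood l).1.measurableSet))
  have hEsub : ∀ k, E k ⊆ g k := fun k => Set.diff_subset
  have hEdisj : ∀ k l, k ≠ l → Disjoint (E k) (E l) := by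
    intro k l hkl
    rcases lt_or_gt_of_ne hkl with h | h
    · rw [Set.disjoint_right]
      rintro x ⟨-, hx2⟩ hxk
      exact hx2 (Set.mem_union_right _ (Set.mem_iUnion.mpr ⟨k, Set.mem_iUnion.mpr ⟨h, (hEsub k) hxk⟩⟩))
    · rw [Set.disjoint_left]
      rintro x ⟨-, hx2⟩ hxl
      exact hx2 (Set.mem_union_right _ (Set.mem_iUnion.mpr ⟨l, Set.mem_iUnion.mpr ⟨h, (hEsub l) hxl⟩⟩))
  have hEA0 : ∀ k, Disjoint (E k) A0 := by
    intro k
    rw [Set.disjoint_left]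
    rintro x ⟨-, hx2⟩ hx0
    exact hx2 (Set.mem_union_left _ hx0)
  have hEunion : A \ A0 ⊆ ⋃ k, E k := by
    intro x hx
    have hxg : x ∈ ⋃ k, g k := hcover2 hx
    obtain ⟨k0, hk0⟩ := Set.mem_iUnion.mp hxg
    have hex : ∃ k, x ∈ g k := ⟨k0, hk0⟩
    set k := Nat.find hex with hk
    refine Set.mem_iUnion.mpr ⟨k, Nat.find_spec hex, ?_⟩
    rintro (h0 | hl)
    · exact hx.2 h0
    · obtain ⟨l, hl'⟩ := Set.mem_iUnion.mp hl
      obtain ⟨hlk, hxl⟩ := Set.mem_iUnion.mp hl'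
      exact Nat.find_min hex hlk hxl
  -- decompositions
  obtain ⟨B0, f0, hB0m, hB0d, hB0u, hB0l, hB0r⟩ := D0
  have hDk : ∀ k : ℕ, ∃ (B : ℕ → Set (X m)) (f : ℕ → Fin Q → X m → V n),
      Dec (A ∩ g k) F L B f := fun k => (hgood k).2
  choose Bk fk hBk using hDk
  -- final decomposition indexed by ℕ ⊕ ℕ × ℕ
  set B : ℕ ⊕ ℕ × ℕ → Set (X m) := fun i =>
    Sum.elim B0 (fun p => Bk p.1 p.2 ∩ E p.1) i with hB
  set f : ℕ ⊕ ℕ × ℕ → Fin Q → X m → V n := fun i =>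
    Sum.elim f0 (fun p => fk p.1 p.2) i with hf
  have hBkm := fun k => (hBk k).1
  have hBkd := fun k => (hBk k).2.1
  have hBku := fun k => (hBk k).2.2.1
  have hBkl := fun k => (hBk k).2.2.2.1
  have hBkr := fun k => (hBk k).2.2.2.2
  have hBksub : ∀ k i, Bk k i ⊆ A ∩ g k := by
    intro k i
    rw [← hBku k]
    exact Set.subset_iUnion _ i
  have hB0sub : ∀ i, B0 i ⊆ A0 := by
    intro i
    rw [← hB0u]
    exact Set.subset_iUnion _ i
  refine exdec_reindex B f ⟨?_, ?_, ?_, ?_, ?_⟩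
  · rintro (i | ⟨k, i⟩)
    · exact hB0m i
    · exact (hBkm k i).inter (hEm k)
  · rintro (i | ⟨k, i⟩) (i' | ⟨k', i'⟩) hne <;> simp only [Function.onFun, hB, Sum.elim_inl, Sum.elim_inr]
    · exact hB0d (by simpa using hne)
    · exact Disjoint.mono (hB0sub i) Set.inter_subset_right ((hEA0 k').symm)
    · exact Disjoint.mono Set.inter_subset_right (hB0sub i') (hEA0 k)
    · by_cases hkk : k = k'
      · subst hkk
        have hii : i ≠ i' := by simpa using hne
        exact Disjoint.mono Set.inter_subset_left Set.inter_subset_left (hBkd k hii)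
      · exact Disjoint.mono Set.inter_subset_right Set.inter_subset_right (hEdisj k k' hkk)
  · apply Set.eq_of_subset_of_subset
    · rintro x hx
      obtain ⟨i, hi⟩ := Set.mem_iUnion.mp hx
      rcases i with i | ⟨k, i⟩
      · exact hA0sub (hB0sub i hi)
      · exact (hBksub k i hi.1).1
    · intro x hx
      by_cases hx0 : x ∈ A0
      · rw [← hB0u] at hx0
        obtain ⟨i, hi⟩ := Set.mem_iUnion.mp hx0
        exact Set.mem_iUnion.mpr ⟨Sum.inl i, hi⟩
      · have hxE : x ∈ ⋃ k, E k := hEunion ⟨hx, hx0⟩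
        obtain ⟨k, hk⟩ := Set.mem_iUnion.mp hxE
        have hxg : x ∈ A ∩ g k := ⟨hx, hEsub k hk⟩
        rw [← hBku k] at hxg
        obtain ⟨i, hi⟩ := Set.mem_iUnion.mp hxg
        exact Set.mem_iUnion.mpr ⟨Sum.inr (k, i), hi, hk⟩
  · rintro (i | ⟨k, i⟩) j
    · exact hB0l i j
    · exact (hBkl k i j).mono Set.inter_subset_left
  · rintro (i | ⟨k, i⟩) x hx
    · exact hB0r i x hx
    · exact hBkr k i x hx.1

lemma measurable_eqzero_of_lipschitzOn {s : Set (X m)} (hs : MeasurableSet s)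
    {g : X m → ℝ} {K : ℝ≥0} (hg : LipschitzOnWith K g s) :
    MeasurableSet {x ∈ s | g x = 0} := by
  obtain ⟨g', hg', heq⟩ := hg.extend_real
  have : {x ∈ s | g x = 0} = s ∩ g' ⁻¹' {0} := by
    ext x
    simp only [Set.mem_setOf_eq, Set.mem_inter_iff, Set.mem_preimage, Set.mem_singleton_iff]
    constructor
    · rintro ⟨hx, hx0⟩; exact ⟨hx, by rw [← heq hx]; exact hx0⟩
    · rintro ⟨hx, hx0⟩; exact ⟨hx, by rw [heq hx]; exact hx0⟩
  rw [this]
  exact hs.inter (hg'.continuous.measurable (measurableSet_singleton 0))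

lemma measurable_eqset_of_lipschitzOn {s : Set (X m)} (hs : MeasurableSet s)
    {f g : X m → V n} {K : ℝ≥0} (hf : LipschitzOnWith K f s) (hg : LipschitzOnWith K g s) :
    MeasurableSet {x ∈ s | f x = g x} := by
  have hlip : LipschitzOnWith (K + K) (fun x => dist (f x) (g x)) s := by
    rw [lipschitzOnWith_iff_dist_le_mul]
    intro x hx y hy
    have h1 := hf.dist_le_mul x hx y hy
    have h2 := hg.dist_le_mul x hx y hy
    have h3 := dist_dist_dist_le (f x) (g x) (f y) (g y)
    push_cast
    calc dist (dist (f x) (g x)) (dist (f y) (g y))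
        ≤ dist (f x) (f y) + dist (g x) (g y) := h3
      _ ≤ (K : ℝ) * dist x y + (K : ℝ) * dist x y := add_le_add h1 h2
      _ = ((K : ℝ) + (K : ℝ)) * dist x y := by ring
  have : {x ∈ s | f x = g x} = {x ∈ s | (fun x => dist (f x) (g x)) x = 0} := by
    ext x
    simp [dist_eq_zero]
  rw [this]
  exact measurable_eqzero_of_lipschitzOn hs hlip

/-- On the set where all sheets agree, we have a trivial decomposition. -/
lemma exdec_diag (hQ : 0 < Q) {A : Set (X m)} (hA : MeasurableSet A)
    {F : X m → AQ n Q} {L : ℝ≥0}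
    (hF : ∀ x ∈ A, ∀ y ∈ A, GdistQ n Q (F x) (F y) ≤ L * dist x y)
    (hdiag : ∀ x ∈ A, (diamt (F x).out : ℝ) = 0) :
    ExDec A F L := by
  classical
  set j0 : Fin Q := ⟨0, hQ⟩
  set f : Fin Q → X m → V n := fun _ x => (F x).out j0 with hfdef
  have hall : ∀ x ∈ A, ∀ j, (F x).out j = (F x).out j0 := by
    intro x hx j
    have : diamt (F x).out = 0 := by
      have := hdiag x hx
      exact_mod_cast this
    exact diamt_eq_zero this j j0
  refine exdec_reindex (ι := Unit) (fun _ => A) (fun _ => f) ⟨?_, ?_, ?_, ?_, ?_⟩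
  · intro _; exact hA
  · intro a b hab; exact absurd rfl hab
  · simp [Set.iUnion_const]
  · intro _ j
    rw [lipschitzOnWith_iff_dist_le_mul]
    intro x hx y hy
    obtain ⟨σ, -, hptw⟩ := gdist_exists_pointwise (F x).out (F y).out
    have h1 : ‖(F x).out j0 - (F y).out (σ j0)‖ ≤ Gdist n Q (F x).out (F y).out := hptw j0
    have h2 : (F y).out (σ j0) = (F y).out j0 := hall y hy (σ j0)
    rw [h2] at h1
    calc dist (f j x) (f j y) = ‖(F x).out j0 - (F y).out j0‖ := by
          simp [hfdef, dist_eq_norm]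
      _ ≤ Gdist n Q (F x).out (F y).out := h1
      _ ≤ L * dist x y := hF x hx y hy
  · intro _ x hx
    have : (fun j => f j x) = (F x).out := by
      funext j
      simp only [hfdef]
      exact (hall x hx j).symm
    rw [this]
    exact (Quotient.out_eq (F x)).symm

lemma gdist_restrict {c : ℕ} {Dy Dz : Finset (Fin Q)}
    (P S : Fin Q → V n) (τ : Equiv.Perm (Fin Q)) (hττ : ∀ j, j ∈ Dy ↔ τ j ∈ Dz)
    (ey : Fin c ≃ {j // j ∈ Dy}) (ez : Fin c ≃ {j // j ∈ Dz}) :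
    Gdist n c (fun a => P (ey a).1) (fun a => S (ez a).1) ≤
      Real.sqrt (∑ i, ‖P i - S (τ i)‖ ^ 2) := by
  classical
  set π : Equiv.Perm (Fin c) := ey.trans ((Equiv.subtypeEquiv τ hττ).trans ez.symm) with hπ
  refine le_trans (gdist_le _ _ π) (Real.sqrt_le_sqrt ?_)
  have hterm : ∀ a : Fin c, ((ez (π a)) : Fin Q) = τ ((ey a) : Fin Q) := by
    intro a
    simp [hπ, Equiv.subtypeEquiv_apply]
  have : ∑ a : Fin c, ‖P ((ey a) : Fin Q) - S ((ez (π a)) : Fin Q)‖ ^ 2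
      = ∑ a : Fin c, ‖P ((ey a) : Fin Q) - S (τ ((ey a) : Fin Q))‖ ^ 2 := by
    refine Finset.sum_congr rfl fun a _ => by rw [hterm a]
  rw [this]
  have h2 : ∑ a : Fin c, ‖P ((ey a) : Fin Q) - S (τ ((ey a) : Fin Q))‖ ^ 2
      = ∑ j : {j // j ∈ Dy}, ‖P (j : Fin Q) - S (τ (j : Fin Q))‖ ^ 2 :=
    Equiv.sum_comp ey (fun j : {j // j ∈ Dy} => ‖P (j : Fin Q) - S (τ (j : Fin Q))‖ ^ 2)
  rw [h2, Finset.sum_coe_sort Dy (fun j => ‖P j - S (τ j)‖ ^ 2)]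
  exact Finset.sum_le_sum_of_subset_of_nonneg (Finset.subset_univ _)
    (fun i _ _ => sq_nonneg _)

lemma mk_glue {Q1 Q2 : ℕ} (hsum : Q1 + Q2 = Q) (P : Fin Q → V n) (D : Finset (Fin Q))
    (e1 : Fin Q1 ≃ {j // j ∈ D}) (e2 : Fin Q2 ≃ {j // j ∈ Dᶜ})
    (G1 : Fin Q1 → V n) (G2 : Fin Q2 → V n)
    (h1 : (permSetoid n Q1).r (fun a => P (e1 a).1) G1)
    (h2 : (permSetoid n Q2).r (fun a => P (e2 a).1) G2) :
    (permSetoid n Q).r P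
      (fun j => Sum.elim G1 G2 (((finCongr hsum.symm).trans finSumFinEquiv.symm) j)) := by
  classical
  obtain ⟨π1, hπ1⟩ := h1
  obtain ⟨π2, hπ2⟩ := h2
  set q : Fin Q ≃ Fin Q1 ⊕ Fin Q2 := (finCongr hsum.symm).trans finSumFinEquiv.symm with hq
  set base : Fin Q ≃ {j // j ∈ D} ⊕ {j // ¬ j ∈ D} := (Equiv.sumCompl (· ∈ D)).symm with hbase
  set er : {j // ¬ j ∈ D} ≃ {j // j ∈ Dᶜ} :=
    Equiv.subtypeEquivRight (fun j => (Finset.mem_compl).symm) with her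
  set u1 : {j // j ∈ D} ≃ Fin Q1 := e1.symm.trans π1 with hu1
  set u2 : {j // ¬ j ∈ D} ≃ Fin Q2 := (er.trans e2.symm).trans π2 with hu2
  refine ⟨base.trans ((Equiv.sumCongr u1 u2).trans q.symm), fun j => ?_⟩
  simp only [Equiv.trans_apply]
  rw [Equiv.apply_symm_apply]
  by_cases hj : j ∈ D
  · have hb : base j = Sum.inl ⟨j, hj⟩ := Equiv.sumCompl_symm_apply_of_pos hj
    rw [hb]
    simp only [Equiv.sumCongr_apply, Sum.map_inl, Sum.elim_inl, hu1, Equiv.trans_apply]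
    have := hπ1 (e1.symm ⟨j, hj⟩)
    simpa using this
  · have hb : base j = Sum.inr ⟨j, hj⟩ := Equiv.sumCompl_symm_apply_of_neg hj
    rw [hb]
    simp only [Equiv.sumCongr_apply, Sum.map_inr, Sum.elim_inr, hu2, Equiv.trans_apply]
    have := hπ2 (e2.symm (er ⟨j, hj⟩))
    simpa [her] using this

lemma local_split (hQ : 0 < Q) {A : Set (X m)} (hA : MeasurableSet A)
    {F : X m → AQ n Q} {L : ℝ≥0}
    (hF : ∀ x ∈ A, ∀ y ∈ A, GdistQ n Q (F x) (F y) ≤ L * dist x y)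
    (IH : ∀ Q' : ℕ, Q' < Q → 0 < Q' → ∀ A' : Set (X m), MeasurableSet A' →
      ∀ F' : X m → AQ n Q', (∀ x ∈ A', ∀ y ∈ A', GdistQ n Q' (F' x) (F' y) ≤ L * dist x y) →
      ExDec A' F' L)
    (x0 : X m) (hx0 : x0 ∈ A) (hd : 0 < (diamt (F x0).out : ℝ)) :
    ∃ r : ℝ, 0 < r ∧ ExDec (A ∩ Metric.ball x0 r) F L := by
  classical
  obtain ⟨S, ε, hε, hSne, hSnu, hsep⟩ := cluster_lemma hQ (F x0).out hd
  set P0 : Fin Q → V n := (F x0).out with hP0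
  have hQ1pos : 0 < S.card := Finset.card_pos.mpr hSne
  have hQ1ltQ : S.card < Q := by
    have hle : S.card ≤ Q := by
      simpa using Finset.card_le_univ S
    rcases lt_or_eq_of_le hle with h | h
    · exact h
    · exfalso
      apply hSnu
      apply Finset.eq_of_subset_of_card_le (Finset.subset_univ S)
      simp [h]
  have hsum : S.card + Sᶜ.card = Q := by
    simpa using Finset.card_add_card_compl S
  have hQ2pos : 0 < Sᶜ.card := by omega
  have hQ2ltQ : Sᶜ.card < Q := by omega
  set r : ℝ := ε / (8 * ((L : ℝ) + 1)) with hrdef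
  have hL1 : (0 : ℝ) < (L : ℝ) + 1 := by positivity
  have hrpos : 0 < r := by positivity
  have hLr : (L : ℝ) * r ≤ ε / 8 := by
    rw [hrdef, mul_div_assoc',
      div_le_div_iff₀ (by positivity) (by norm_num : (0:ℝ) < 8)]
    nlinarith [L.coe_nonneg, hε]
  set AB : Set (X m) := A ∩ Metric.ball x0 r with hAB
  -- pointwise matched minimizers to x0
  have h1 : ∀ y ∈ AB, ∃ σ : Equiv.Perm (Fin Q), ∀ i, ‖P0 i - (F y).out (σ i)‖ ≤ ε / 8 := by
    rintro y ⟨hyA, hyB⟩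
    obtain ⟨σ, -, hptw⟩ := gdist_exists_pointwise P0 (F y).out
    refine ⟨σ, fun i => le_trans (hptw i) ?_⟩
    have := hF x0 hx0 y hyA
    have hdist : dist x0 y < r := by
      rw [dist_comm]; exact Metric.mem_ball.mp hyB
    have hGle : Gdist n Q P0 (F y).out ≤ (L : ℝ) * dist x0 y := this
    have : (L : ℝ) * dist x0 y ≤ (L : ℝ) * r :=
      mul_le_mul_of_nonneg_left hdist.le L.coe_nonneg
    linarith
  have h2 : ∀ y ∈ AB, ∀ z ∈ AB, Gdist n Q (F y).out (F z).out ≤ ε / 4 := by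
    rintro y ⟨hyA, hyB⟩ z ⟨hzA, hzB⟩
    have hGle : Gdist n Q (F y).out (F z).out ≤ (L : ℝ) * dist y z := hF y hyA z hzA
    have hdist : dist y z ≤ 2 * r := by
      have h1 := Metric.mem_ball.mp hyB
      have h2 := Metric.mem_ball.mp hzB
      have := dist_triangle y x0 z
      rw [dist_comm x0 z] at this
      linarith
    have : (L : ℝ) * dist y z ≤ (L : ℝ) * (2 * r) :=
      mul_le_mul_of_nonneg_left hdist L.coe_nonneg
    linarith
  -- the cluster sets
  set C : X m → Finset (Fin Q) :=
    fun y => Finset.univ.filter (fun j => ∃ i ∈ S, ‖(F y).out j - P0 i‖ ≤ ε / 2) with hC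
  have claim_img : ∀ y ∈ AB, ∀ σ : Equiv.Perm (Fin Q),
      (∀ i, ‖P0 i - (F y).out (σ i)‖ ≤ ε / 8) → S.image σ = C y := by
    intro y hy σ hσ
    apply Finset.eq_of_subset_of_card_le
    · intro j hj
      obtain ⟨i, hi, rfl⟩ := Finset.mem_image.mp hj
      refine Finset.mem_filter.mpr ⟨Finset.mem_univ _, ⟨i, hi, ?_⟩⟩
      rw [norm_sub_rev]
      linarith [hσ i]
    · -- card (C y) ≤ card (image σ S) = card S : show C y ⊆ S.image σ
      have hsub : C y ⊆ S.image σ := by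
        intro j hj
        obtain ⟨-, i', hi', hclose⟩ := Finset.mem_filter.mp hj
        set i : Fin Q := σ.symm j with hi
        have hji : σ i = j := Equiv.apply_symm_apply σ j
        by_cases hiS : i ∈ S
        · exact Finset.mem_image.mpr ⟨i, hiS, hji⟩
        · exfalso
          have hsep' := hsep i' hi' i hiS
          have h1' : ‖P0 i - (F y).out j‖ ≤ ε / 8 := by
            rw [← hji]; exact hσ i
          have ht : ‖P0 i - P0 i'‖ ≤ ‖P0 i - (F y).out j‖ + ‖(F y).out j - P0 i'‖ :=
            norm_sub_le_norm_sub_add_norm_sub _ _ _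
          linarith [ht, h1', hclose, hsep', norm_sub_rev (P0 i') (P0 i)]
      calc (C y).card ≤ (S.image σ).card := Finset.card_le_card hsub
        _ = S.card := Finset.card_image_of_injective S σ.injective
        _ = (S.image σ).card := (Finset.card_image_of_injective S σ.injective).symm
  have claim_card : ∀ y ∈ AB, (C y).card = S.card := by
    intro y hy
    obtain ⟨σ, hσ⟩ := h1 y hy
    rw [← claim_img y hy σ hσ]
    exact Finset.card_image_of_injective S σ.injective
  have claim_cross : ∀ y ∈ AB, ∀ z ∈ AB, ∀ τ : Equiv.Perm (Fin Q),
      (∀ j, ‖(F y).out j - (F z).out (τ j)‖ ≤ ε / 4) → ∀ j, j ∈ C y ↔ τ j ∈ C z := by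
    intro y hy z hz τ hτ
    have himg : (C y).image τ ⊆ C z := by
      intro j' hj'
      obtain ⟨j, hj, rfl⟩ := Finset.mem_image.mp hj'
      obtain ⟨σ, hσ⟩ := h1 y hy
      rw [← claim_img y hy σ hσ] at hj
      obtain ⟨i, hi, rfl⟩ := Finset.mem_image.mp hj
      refine Finset.mem_filter.mpr ⟨Finset.mem_univ _, ⟨i, hi, ?_⟩⟩
      have t1 := hσ i
      have t2 := hτ (σ i)
      have ht : ‖(F z).out (τ (σ i)) - P0 i‖ ≤
          ‖(F z).out (τ (σ i)) - (F y).out (σ i)‖ + ‖(F y).out (σ i) - P0 i‖ :=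
        norm_sub_le_norm_sub_add_norm_sub _ _ _
      have e1 : ‖(F z).out (τ (σ i)) - (F y).out (σ i)‖
          = ‖(F y).out (σ i) - (F z).out (τ (σ i))‖ := norm_sub_rev _ _
      have e2 : ‖(F y).out (σ i) - P0 i‖ = ‖P0 i - (F y).out (σ i)‖ := norm_sub_rev _ _
      linarith [ht, t1, t2, e1, e2, hε]
    have heq : (C y).image τ = C z := by
      apply Finset.eq_of_subset_of_card_le himg
      rw [Finset.card_image_of_injective _ τ.injective, claim_card y hy, claim_card z hz]
    intro j
    constructor
    · intro hj
      rw [← heq]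
      exact Finset.mem_image.mpr ⟨j, hj, rfl⟩
    · intro hj
      rw [← heq] at hj
      obtain ⟨j', hj', hjj⟩ := Finset.mem_image.mp hj
      rwa [← τ.injective hjj]
  -- normalized cluster sets (defined everywhere)
  set C' : X m → Finset (Fin Q) := fun y => if (C y).card = S.card then C y else S with hC'
  have hC'card : ∀ y, (C' y).card = S.card := by
    intro y
    show (if (C y).card = S.card then C y else S).card = S.card
    by_cases h : (C y).card = S.card
    · rw [if_pos h]; exact h
    · rw [if_neg h]
  have hC'eq : ∀ y ∈ AB, C' y = C y := by
    intro y hy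
    show (if (C y).card = S.card then C y else S) = C y
    rw [if_pos (claim_card y hy)]
  have hC2card : ∀ y, (C' y)ᶜ.card = Sᶜ.card := by
    intro y
    rw [Finset.card_compl, Finset.card_compl, hC'card y]
  have hcross' : ∀ y ∈ AB, ∀ z ∈ AB, ∀ τ : Equiv.Perm (Fin Q),
      (∀ j, ‖(F y).out j - (F z).out (τ j)‖ ≤ ε / 4) →
      (∀ j, (j ∈ C' y ↔ τ j ∈ C' z) ∧ (j ∈ (C' y)ᶜ ↔ τ j ∈ (C' z)ᶜ)) := by
    intro y hy z hz τ hτ j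
    rw [hC'eq y hy, hC'eq z hz, Finset.mem_compl, Finset.mem_compl]
    have := claim_cross y hy z hz τ hτ j
    exact ⟨this, not_iff_not.mpr this⟩
  -- the two sub-functions
  set e1 : ∀ y : X m, Fin S.card ≃ {j // j ∈ C' y} :=
    fun y => ((C' y).equivFin.trans (finCongr (hC'card y))).symm with he1
  set e2 : ∀ y : X m, Fin Sᶜ.card ≃ {j // j ∈ (C' y)ᶜ} :=
    fun y => (((C' y)ᶜ).equivFin.trans (finCongr (hC2card y))).symm with he2
  set tup1 : X m → Fin S.card → V n := fun y a => (F y).out ((e1 y a) : Fin Q) with htup1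
  set tup2 : X m → Fin Sᶜ.card → V n := fun y a => (F y).out ((e2 y a) : Fin Q) with htup2
  set F1 : X m → AQ n S.card := fun y => Quotient.mk (permSetoid n S.card) (tup1 y) with hF1
  set F2 : X m → AQ n Sᶜ.card := fun y => Quotient.mk (permSetoid n Sᶜ.card) (tup2 y) with hF2
  have hABm : MeasurableSet AB := hA.inter Metric.isOpen_ball.measurableSet
  -- Lipschitz bounds for F1, F2 on AB
  have hτmin : ∀ y ∈ AB, ∀ z ∈ AB, ∃ τ : Equiv.Perm (Fin Q),
      Gdist n Q (F y).out (F z).out = Real.sqrt (∑ i, ‖(F y).out i - (F z).out (τ i)‖ ^ 2) ∧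
      (∀ j, ‖(F y).out j - (F z).out (τ j)‖ ≤ ε / 4) := by
    intro y hy z hz
    obtain ⟨τ, heq, hptw⟩ := gdist_exists_pointwise (F y).out (F z).out
    exact ⟨τ, heq, fun j => le_trans (hptw j) (h2 y hy z hz)⟩
  have hF1lip : ∀ y ∈ AB, ∀ z ∈ AB, GdistQ n S.card (F1 y) (F1 z) ≤ L * dist y z := by
    intro y hy z hz
    obtain ⟨τ, heq, hptw⟩ := hτmin y hy z hz
    rw [hF1, gdistQ_mk]
    have hττ : ∀ j, j ∈ C' y ↔ τ j ∈ C' z := fun j => (hcross' y hy z hz τ hptw j).1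
    have := gdist_restrict (n := n) (F y).out (F z).out τ hττ (e1 y) (e1 z)
    rw [← heq] at this
    exact le_trans this (hF y hy.1 z hz.1)
  have hF2lip : ∀ y ∈ AB, ∀ z ∈ AB, GdistQ n Sᶜ.card (F2 y) (F2 z) ≤ L * dist y z := by
    intro y hy z hz
    obtain ⟨τ, heq, hptw⟩ := hτmin y hy z hz
    rw [hF2, gdistQ_mk]
    have hττ : ∀ j, j ∈ (C' y)ᶜ ↔ τ j ∈ (C' z)ᶜ := fun j => (hcross' y hy z hz τ hptw j).2
    have := gdist_restrict (n := n) (F y).out (F z).out τ hττ (e2 y) (e2 z)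
    rw [← heq] at this
    exact le_trans this (hF y hy.1 z hz.1)
  -- apply the induction hypothesis
  obtain ⟨B1, g1, h1m, h1d, h1u, h1l, h1r⟩ :=
    IH S.card hQ1ltQ hQ1pos AB hABm F1 hF1lip
  obtain ⟨B2, g2, h2m, h2d, h2u, h2l, h2r⟩ :=
    IH Sᶜ.card hQ2ltQ hQ2pos AB hABm F2 hF2lip
  set q : Fin Q ≃ Fin S.card ⊕ Fin Sᶜ.card := (finCongr hsum.symm).trans finSumFinEquiv.symm
  refine ⟨r, hrpos, exdec_reindex (ι := ℕ × ℕ)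
    (fun p => B1 p.1 ∩ B2 p.2)
    (fun p j x => Sum.elim (fun c => g1 p.1 c x) (fun c => g2 p.2 c x) (q j))
    ⟨?_, ?_, ?_, ?_, ?_⟩⟩
  · intro p
    exact (h1m p.1).inter (h2m p.2)
  · rintro ⟨a, b⟩ ⟨a', b'⟩ hne
    simp only [Function.onFun]
    by_cases haa : a = a'
    · subst haa
      have hbb : b ≠ b' := by simpa using hne
      exact Disjoint.mono Set.inter_subset_right Set.inter_subset_right (h2d hbb)
    · exact Disjoint.mono Set.inter_subset_left Set.inter_subset_left (h1d haa)
  · apply Set.eq_of_subset_of_subset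
    · rintro x hx
      obtain ⟨p, hp⟩ := Set.mem_iUnion.mp hx
      have hmem : x ∈ B1 p.1 := hp.1
      rw [← hAB, ← h1u]
      exact Set.mem_iUnion.mpr ⟨p.1, hmem⟩
    · intro x hx
      have hxAB : x ∈ AB := by rw [hAB]; exact hx
      have hx1 : x ∈ ⋃ i, B1 i := by rw [h1u]; exact hxAB
      have hx2 : x ∈ ⋃ i, B2 i := by rw [h2u]; exact hxAB
      obtain ⟨a, ha⟩ := Set.mem_iUnion.mp hx1
      obtain ⟨b, hb⟩ := Set.mem_iUnion.mp hx2
      exact Set.mem_iUnion.mpr ⟨(a, b), ha, hb⟩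
  · rintro ⟨a, b⟩ j
    rcases hqj : q j with c | c
    · simpa [hqj] using (h1l a c).mono (Set.inter_subset_left)
    · simpa [hqj] using (h2l b c).mono (Set.inter_subset_right)
  · rintro ⟨a, b⟩ x hx
    have hxAB : x ∈ AB := by
      have : x ∈ B1 a := hx.1
      have h' : x ∈ ⋃ i, B1 i := Set.mem_iUnion.mpr ⟨a, this⟩
      rwa [h1u] at h'
    have h1rx := h1r a x hx.1
    rw [hF1] at h1rx
    have hrel1 : (permSetoid n S.card).r (tup1 x) (fun c => g1 a c x) :=
      Quotient.exact h1rx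
    have h2rx := h2r b x hx.2
    rw [hF2] at h2rx
    have hrel2 : (permSetoid n Sᶜ.card).r (tup2 x) (fun c => g2 b c x) :=
      Quotient.exact h2rx
    have hglue := mk_glue (n := n) hsum (F x).out (C' x) (e1 x) (e2 x)
      (fun c => g1 a c x) (fun c => g2 b c x) hrel1 hrel2
    exact (Quotient.out_eq (F x)).symm.trans (Quotient.sound hglue)

lemma main_dec : ∀ Q : ℕ, 0 < Q → ∀ A : Set (X m), MeasurableSet A →
    ∀ F : X m → AQ n Q, ∀ L : ℝ≥0,
    (∀ x ∈ A, ∀ y ∈ A, GdistQ n Q (F x) (F y) ≤ L * dist x y) → ExDec A F L := by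
  intro Q
  induction Q using Nat.strong_induction_on with
  | _ Q IH =>
    intro hQ A hA F L hF
    classical
    set gd : X m → ℝ := fun x => (diamt (F x).out : ℝ) with hgd
    have hgdlip : LipschitzOnWith (2 * L) gd A := by
      rw [lipschitzOnWith_iff_dist_le_mul]
      intro x hx y hy
      have hxy : Gdist n Q (F x).out (F y).out ≤ (L : ℝ) * dist x y := hF x hx y hy
      have hyx : Gdist n Q (F y).out (F x).out ≤ (L : ℝ) * dist x y := by
        rw [gdist_comm]; exact hxy
      obtain ⟨σ, -, hptw⟩ := gdist_exists_pointwise (F x).out (F y).out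
      obtain ⟨σ', -, hptw'⟩ := gdist_exists_pointwise (F y).out (F x).out
      have h1 : gd x ≤ gd y + 2 * ((L : ℝ) * dist x y) := by
        have := diamt_le_of_close hQ (fun i => le_trans (hptw i) hxy)
        exact this
      have h2 : gd y ≤ gd x + 2 * ((L : ℝ) * dist x y) := by
        have := diamt_le_of_close hQ (fun i => le_trans (hptw' i) hyx)
        exact this
      rw [Real.dist_eq, abs_le]
      push_cast
      constructor <;> linarith
    set A0 : Set (X m) := {x ∈ A | gd x = 0} with hA0
    have hA0m : MeasurableSet A0 := measurable_eqzero_of_lipschitzOn hA hgdlip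
    have hA0sub : A0 ⊆ A := fun x hx => hx.1
    have D0 : ExDec A0 F L := by
      refine exdec_diag hQ hA0m (fun x hx y hy => hF x (hA0sub hx) y (hA0sub hy)) ?_
      intro x hx
      exact hx.2
    refine exdec_assemble hA0sub hA0m D0 ?_
    intro x hx
    have hd : 0 < (diamt (F x).out : ℝ) := by
      rcases lt_or_eq_of_le (diamt (F x).out).coe_nonneg with h | h
      · exact h
      · exfalso
        exact hx.2 ⟨hx.1, h.symm⟩
    exact local_split hQ hA hF (fun Q' hlt hQ' A' hA' F' hF' => IH Q' hlt hQ' A' hA' F' L hF') x hx.1 hd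

lemma reindex_pred {ι : Type} [Encodable ι] {A : Set (X m)}
    (B : ι → Set (X m)) (f : ι → Fin Q → X m → V n)
    (Pred : Set (X m) → (Fin Q → X m → V n) → Prop)
    (hP : ∀ i, Pred (B i) (f i)) (hP0 : Pred ∅ (fun _ _ => 0))
    (hdisj : Pairwise (Function.onFun Disjoint B)) (hun : ⋃ i, B i = A) :
    ∃ (B' : ℕ → Set (X m)) (f' : ℕ → Fin Q → X m → V n),
      (∀ k, Pred (B' k) (f' k)) ∧ Pairwise (Function.onFun Disjoint B') ∧ ⋃ k, B' k = A := by
  classical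
  refine ⟨fun k => (Encodable.decode₂ ι k).elim ∅ B,
    fun k => (Encodable.decode₂ ι k).elim (fun _ _ => 0) f, ?_, ?_, ?_⟩
  · intro k
    cases hd : Encodable.decode₂ ι k with
    | none => simpa [hd] using hP0
    | some i => simpa [hd] using hP i
  · intro a b hab
    cases hda : Encodable.decode₂ ι a with
    | none => simp [Function.onFun, hda]
    | some i =>
      cases hdb : Encodable.decode₂ ι b with
      | none => simp [Function.onFun, hdb]
      | some i' =>
        have hii' : i ≠ i' := by
          intro hc
          subst hc
          exact hab ((Encodable.mem_decode₂.mp hda).symm.trans (Encodable.mem_decode₂.mp hdb))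
        simpa [Function.onFun, hda, hdb] using hdisj hii'
  · apply Set.eq_of_subset_of_subset
    · intro x hx
      obtain ⟨k, hk⟩ := Set.mem_iUnion.mp hx
      cases hd : Encodable.decode₂ ι k with
      | none => rw [hd] at hk; simp at hk
      | some i =>
        rw [hd] at hk
        rw [← hun]
        exact Set.mem_iUnion.mpr ⟨i, hk⟩
    · intro x hx
      rw [← hun] at hx
      obtain ⟨i, hi⟩ := Set.mem_iUnion.mp hx
      refine Set.mem_iUnion.mpr ⟨Encodable.encode i, ?_⟩
      rw [Encodable.decode₂_encode]
      exact hi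

end QV

open QV in
/-- Decomposition of a Lipschitz `Q`-valued map `F : A → A_Q(ℝⁿ)` on a measurable set
`A ⊆ ℝᵐ`: there are a countable partition of `A` into bounded measurable pieces `Ai i`
and Lipschitz selections `f i j` on each piece, with the same Lipschitz constant, such that
on each piece any two selected sheets either coincide identically or are everywhere distinct. -/
theorem statement2 (m n Q : ℕ) (hm : 1 ≤ m) (hn : 1 ≤ n) (hQ : 1 ≤ Q)
    (A : Set (EuclideanSpace ℝ (Fin m))) (hA : MeasurableSet A)
    (F : EuclideanSpace ℝ (Fin m) → AQ n Q) (L : ℝ≥0)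
    (hF : ∀ x ∈ A, ∀ y ∈ A, GdistQ n Q (F x) (F y) ≤ L * dist x y) :
    ∃ (Ai : ℕ → Set (EuclideanSpace ℝ (Fin m)))
      (f : ℕ → Fin Q → EuclideanSpace ℝ (Fin m) → EuclideanSpace ℝ (Fin n)),
      (∀ i, MeasurableSet (Ai i)) ∧
      (∀ i, Bornology.IsBounded (Ai i)) ∧
      (Pairwise fun i j => Disjoint (Ai i) (Ai j)) ∧
      (⋃ i, Ai i) = A ∧
      (∀ i j, LipschitzOnWith L (f i j) (Ai i)) ∧
      (∀ i, ∀ x ∈ Ai i, F x = Quotient.mk (permSetoid n Q) (fun j => f i j x)) ∧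
      (∀ i, ∀ j j' : Fin Q,
        (∀ x ∈ Ai i, f i j x = f i j' x) ∨ (∀ x ∈ Ai i, f i j x ≠ f i j' x)) := by
  classical
  obtain ⟨B, f, hm', hdisj, hun, hlip, hrep⟩ := main_dec Q hQ A hA F L hF
  -- annuli
  set ann : ℕ → Set (X m) := fun k => Metric.ball 0 ((k : ℝ) + 1) \ Metric.ball 0 (k : ℝ)
    with hann
  have hannm : ∀ k, MeasurableSet (ann k) :=
    fun k => Metric.isOpen_ball.measurableSet.diff Metric.isOpen_ball.measurableSet
  have hannb : ∀ k, Bornology.IsBounded (ann k) :=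
    fun k => Metric.isBounded_ball.subset Set.diff_subset
  have hanncov : ∀ x : X m, ∃ k : ℕ, x ∈ ann k := by
    intro x
    refine ⟨⌊dist x 0⌋₊, ?_, ?_⟩
    · exact Metric.mem_ball.mpr (Nat.lt_floor_add_one _)
    · intro hc
      have := Metric.mem_ball.mp hc
      have h2 := Nat.floor_le (dist_nonneg : (0:ℝ) ≤ dist x 0)
      linarith
  have hanndisj : ∀ k k' : ℕ, k ≠ k' → Disjoint (ann k) (ann k') := by
    intro k k' hkk
    rcases Nat.lt_or_ge k k' with h | h
    · rw [Set.disjoint_left]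
      rintro x ⟨hx1, -⟩ ⟨-, hx4⟩
      apply hx4
      have h1 := Metric.mem_ball.mp hx1
      have : (k : ℝ) + 1 ≤ (k' : ℝ) := by exact_mod_cast h
      exact Metric.mem_ball.mpr (by linarith)
    · have h' : k' < k := by omega
      rw [Set.disjoint_right]
      rintro x ⟨hx1, -⟩ ⟨-, hx4⟩
      apply hx4
      have h1 := Metric.mem_ball.mp hx1
      have : (k' : ℝ) + 1 ≤ (k : ℝ) := by exact_mod_cast h'
      exact Metric.mem_ball.mpr (by linarith)
  -- pattern refinement
  set κ : Type := Finset (Fin Q × Fin Q) with hκ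
  set piece : (ℕ × ℕ) × κ → Set (X m) := fun w =>
    {x ∈ B w.1.1 ∩ ann w.1.2 |
      ∀ pr : Fin Q × Fin Q, (f w.1.1 pr.1 x = f w.1.1 pr.2 x ↔ pr ∈ w.2)} with hpiece
  set sel : (ℕ × ℕ) × κ → Fin Q → X m → V n := fun w => f w.1.1 with hsel
  have hBsub : ∀ i, B i ⊆ A := by
    intro i
    rw [← hun]
    exact Set.subset_iUnion _ i
  set Pred : Set (X m) → (Fin Q → X m → V n) → Prop := fun s g =>
    MeasurableSet s ∧ Bornology.IsBounded s ∧ (∀ j, LipschitzOnWith L (g j) s) ∧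
    (∀ x ∈ s, F x = Quotient.mk (permSetoid n Q) (fun j => g j x)) ∧
    (∀ j j' : Fin Q, (∀ x ∈ s, g j x = g j' x) ∨ (∀ x ∈ s, g j x ≠ g j' x)) with hPred
  have hPpiece : ∀ w, Pred (piece w) (sel w) := by
    rintro ⟨⟨i, k⟩, p⟩
    have hsub : piece ((i, k), p) ⊆ B i ∩ ann k := fun x hx => hx.1
    refine ⟨?_, ?_, ?_, ?_, ?_⟩
    · -- measurability
      have hskm : MeasurableSet (B i ∩ ann k) := (hm' i).inter (hannm k)
      have : piece ((i, k), p) = (B i ∩ ann k) ∩ ⋂ pr : Fin Q × Fin Q,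
          (if pr ∈ p then {x ∈ B i ∩ ann k | f i pr.1 x = f i pr.2 x}
            else (B i ∩ ann k) \ {x ∈ B i ∩ ann k | f i pr.1 x = f i pr.2 x}) := by
        ext x
        simp only [hpiece, Set.mem_setOf_eq, Set.mem_inter_iff, Set.mem_iInter]
        constructor
        · rintro ⟨hx, hiff⟩
          refine ⟨hx, fun pr => ?_⟩
          by_cases hpr : pr ∈ p
          · rw [if_pos hpr]
            exact ⟨hx, (hiff pr).mpr hpr⟩
          · rw [if_neg hpr]
            exact ⟨hx, fun hc => hpr ((hiff pr).mp hc.2)⟩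
        · rintro ⟨hx, hall⟩
          refine ⟨hx, fun pr => ?_⟩
          have := hall pr
          by_cases hpr : pr ∈ p
          · rw [if_pos hpr] at this
            exact ⟨fun _ => hpr, fun _ => this.2⟩
          · rw [if_neg hpr] at this
            exact ⟨fun hc => absurd ⟨hx, hc⟩ this.2, fun hc => absurd hc hpr⟩
      rw [this]
      refine hskm.inter (MeasurableSet.iInter fun pr => ?_)
      by_cases hpr : pr ∈ p
      · rw [if_pos hpr]
        exact measurable_eqset_of_lipschitzOn hskm
          ((hlip i pr.1).mono Set.inter_subset_left)
          ((hlip i pr.2).mono Set.inter_subset_left)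
      · rw [if_neg hpr]
        exact hskm.diff (measurable_eqset_of_lipschitzOn hskm
          ((hlip i pr.1).mono Set.inter_subset_left)
          ((hlip i pr.2).mono Set.inter_subset_left))
    · exact (hannb k).subset (hsub.trans Set.inter_subset_right)
    · intro j
      exact (hlip i j).mono (hsub.trans Set.inter_subset_left)
    · intro x hx
      exact hrep i x (hsub hx).1
    · intro j j'
      by_cases hpr : (j, j') ∈ p
      · left
        intro x hx
        exact (hx.2 (j, j')).mpr hpr
      · right
        intro x hx hc
        exact hpr ((hx.2 (j, j')).mp hc)
  have hPdisj : Pairwise (Function.onFun Disjoint piece) := by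
    rintro ⟨⟨i, k⟩, p⟩ ⟨⟨i', k'⟩, p'⟩ hne
    simp only [Function.onFun]
    by_cases hii : i = i'
    · by_cases hkk : k = k'
      · subst hii; subst hkk
        have hpp : p ≠ p' := by simpa using hne
        rw [Set.disjoint_left]
        rintro x hx1 hx2
        apply hpp
        ext pr
        rw [← hx1.2 pr, hx2.2 pr]
      · exact Disjoint.mono (fun x hx => hx.1.2) (fun x hx => hx.1.2) (hanndisj k k' hkk)
    · exact Disjoint.mono (fun x hx => hx.1.1) (fun x hx => hx.1.1) (hdisj hii)
  have hPun : ⋃ w, piece w = A := by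
    apply Set.eq_of_subset_of_subset
    · intro x hx
      obtain ⟨w, hw⟩ := Set.mem_iUnion.mp hx
      exact hBsub w.1.1 hw.1.1
    · intro x hx
      have : x ∈ ⋃ i, B i := hun ▸ hx
      obtain ⟨i, hi⟩ := Set.mem_iUnion.mp this
      obtain ⟨k, hk⟩ := hanncov x
      refine Set.mem_iUnion.mpr ⟨((i, k),
        Finset.univ.filter (fun pr : Fin Q × Fin Q => f i pr.1 x = f i pr.2 x)), ⟨hi, hk⟩, ?_⟩
      intro pr
      rw [Finset.mem_filter]
      exact ⟨fun h => ⟨Finset.mem_univ _, h⟩, fun h => h.2⟩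
  have hP0 : Pred ∅ (fun _ _ => 0) :=
    ⟨MeasurableSet.empty, Bornology.isBounded_empty,
      fun _ => lipschitzOnWith_empty _ _,
      fun x hx => absurd hx (Set.notMem_empty x),
      fun _ _ => Or.inl (fun x hx => absurd hx (Set.notMem_empty x))⟩
  obtain ⟨B', f', hP', hdisj', hun'⟩ :=
    reindex_pred piece sel Pred hPpiece hP0 hPdisj hPun
  exact ⟨B', f', fun k => (hP' k).1, fun k => (hP' k).2.1, hdisj', hun',
    fun k j => (hP' k).2.2.1 j, fun k => (hP' k).2.2.2.1, fun k => (hP' k).2.2.2.2⟩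
end

section
/- There exist constants c̄ > 0 and C > 0, depending only on m, n and Q, with the following property. Let Ω ⊂ ℝ^m be a bounded open set and let f_1,…,f_Q : Ω → ℝ^n be Lipschitz maps with Lip(f_i) ≤ c̄ for every i. Then | Σ_{i=1}^Q ∫_Ω √(det(Id_m + Df_i(x)ᵀ Df_i(x))) dx − Q|Ω| − ½ ∫_Ω Σ_{i=1}^Q |Df_i(x)|^2 dx | ≤ C ∫_Ω Σ_{i=1}^Q |Df_i(x)|^4 dx. -/
open MeasureTheory Matrix
open scoped BigOperators RealInnerProductSpace NNReal

/-- The Jacobian matrix (w.r.t. the standard bases) of a map `f : ℝᵐ → ℝⁿ` at a point `x`,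
computed via the differential of `f` within the set `s` (which, by Rademacher's theorem,
is the honest differential at a.e. point of an open set `s` on which `f` is Lipschitz). -/
noncomputable def jacobianWithin (m n : ℕ)
    (f : EuclideanSpace ℝ (Fin m) → EuclideanSpace ℝ (Fin n))
    (s : Set (EuclideanSpace ℝ (Fin m))) (x : EuclideanSpace ℝ (Fin m)) :
    Matrix (Fin n) (Fin m) ℝ :=
  fun a b => ⟪fderivWithin ℝ f s x (EuclideanSpace.single b 1), EuclideanSpace.single a 1⟫

/-- Frobenius (Hilbert–Schmidt) norm of a real `n × m` matrix. -/
noncomputable def frobNorm (m n : ℕ) (D : Matrix (Fin n) (Fin m) ℝ) : ℝ :=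
  Real.sqrt (∑ a, ∑ b, D a b ^ 2)

open Finset in
lemma aux_one_add_sum_le_prod {ι : Type*} (s : Finset ι) (t : ι → ℝ) (ht : ∀ i, 0 ≤ t i) :
    1 + ∑ i ∈ s, t i ≤ ∏ i ∈ s, (1 + t i) := by
  classical
  induction s using Finset.cons_induction with
  | empty => simp
  | cons a s ha ih =>
    rw [Finset.prod_cons, Finset.sum_cons]
    have hs : 0 ≤ ∑ i ∈ s, t i := Finset.sum_nonneg fun i _ => ht i
    nlinarith [ht a, mul_nonneg (ht a) hs]

lemma aux_scalar {ι : Type*} [Fintype ι] (t : ι → ℝ) (ht : ∀ i, 0 ≤ t i)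
    (hT : ∑ i, t i ≤ 1) :
    |Real.sqrt (∏ i, (1 + t i)) - 1 - (∑ i, t i) / 2| ≤ (∑ i, t i) ^ 2 := by
  set T := ∑ i, t i with hTdef
  have hT0 : 0 ≤ T := Finset.sum_nonneg fun i _ => ht i
  have hlow : 1 + T ≤ ∏ i, (1 + t i) := aux_one_add_sum_le_prod _ t ht
  have hupexp : ∏ i, (1 + t i) ≤ Real.exp T := by
    calc ∏ i, (1 + t i) ≤ ∏ i, Real.exp (t i) :=
          Finset.prod_le_prod (fun i _ => by linarith [ht i]) (fun i _ => by linarith [Real.add_one_le_exp (t i)])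
      _ = Real.exp T := by rw [← Real.exp_sum]
  have hexp : Real.exp T ≤ 1 + T + T ^ 2 := by
    have h2 := Real.exp_bound (x := T) (by rw [abs_of_nonneg hT0]; exact hT) (n := 2) (by norm_num)
    have habs : |Real.exp T - (1 + T)| ≤ T ^ 2 * (3 / (2*2)) := by
      have : ∑ i ∈ Finset.range 2, T ^ i / i.factorial = 1 + T := by
        simp [Finset.sum_range_succ]
      rw [this] at h2
      simpa [abs_of_nonneg hT0] using h2
    have := abs_le.1 habs
    nlinarith
  have hup : ∏ i, (1 + t i) ≤ 1 + T + T ^ 2 := hupexp.trans hexp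
  have hsqlow : 1 + T / 2 - T ^ 2 / 8 ≤ Real.sqrt (∏ i, (1 + t i)) := by
    have h1 : 1 + T / 2 - T ^ 2 / 8 ≤ Real.sqrt (1 + T) :=
      (Real.le_sqrt (by nlinarith) (by linarith)).2 (by nlinarith [mul_nonneg (pow_nonneg hT0 3) (sub_nonneg.2 hT)])
    exact h1.trans (Real.sqrt_le_sqrt hlow)
  have hsqup : Real.sqrt (∏ i, (1 + t i)) ≤ 1 + T / 2 + T ^ 2 := by
    have h1 : ∏ i, (1 + t i) ≤ (1 + T / 2 + T ^ 2) ^ 2 := by nlinarith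
    calc Real.sqrt (∏ i, (1 + t i)) ≤ Real.sqrt ((1 + T / 2 + T ^ 2) ^ 2) := Real.sqrt_le_sqrt h1
      _ = 1 + T / 2 + T ^ 2 := Real.sqrt_sq (by nlinarith)
  rw [abs_le]
  constructor <;> nlinarith
open Matrix

lemma aux_det_eigen {k : ℕ} {S : Matrix (Fin k) (Fin k) ℝ} (hS : S.PosSemidef) :
    (1 + S).det = ∏ i, (1 + hS.isHermitian.eigenvalues i) ∧
      S.trace = ∑ i, hS.isHermitian.eigenvalues i := by
  classical
  set hH := hS.isHermitian
  set U : Matrix (Fin k) (Fin k) ℝ := (hH.eigenvectorUnitary : Matrix (Fin k) (Fin k) ℝ)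
  have hU1 : U * star U = 1 := (Matrix.mem_unitaryGroup_iff).mp hH.eigenvectorUnitary.2
  have hU2 : star U * U = 1 := (Matrix.mem_unitaryGroup_iff').mp hH.eigenvectorUnitary.2
  have hst := hH.spectral_theorem
  rw [Unitary.conjStarAlgAut_apply] at hst
  have hdiag : diagonal (RCLike.ofReal ∘ hH.eigenvalues) = diagonal hH.eigenvalues := by
    congr 1
  constructor
  · have h1 : (1 : Matrix (Fin k) (Fin k) ℝ) + S
        = U * (1 + diagonal hH.eigenvalues) * star U := by
      rw [mul_add, add_mul, mul_one, hU1, ← hdiag, ← hst]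
    rw [h1, det_mul, det_mul, mul_comm (U.det), mul_assoc, ← det_mul, hU1, det_one, mul_one]
    rw [show (1 : Matrix (Fin k) (Fin k) ℝ) + diagonal hH.eigenvalues
        = diagonal (fun i => 1 + hH.eigenvalues i) by
      rw [← diagonal_one, diagonal_add]]
    rw [det_diagonal]
  · conv_lhs => rw [hst]
    rw [hdiag, trace_mul_cycle, hU2, one_mul, trace_diagonal]

lemma aux_det_est (m n : ℕ) (A : Matrix (Fin n) (Fin m) ℝ)
    (hT : ∑ a, ∑ b, A a b ^ 2 ≤ 1) :
    |Real.sqrt ((1 + Aᵀ * A).det) - 1 - (∑ a, ∑ b, A a b ^ 2) / 2|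
      ≤ (∑ a, ∑ b, A a b ^ 2) ^ 2 := by
  classical
  have hconj : Aᴴ = Aᵀ := conjTranspose_eq_transpose_of_trivial A
  have hS : (Aᵀ * A).PosSemidef := by rw [← hconj]; exact posSemidef_conjTranspose_mul_self A
  have htr : (Aᵀ * A).trace = ∑ a, ∑ b, A a b ^ 2 := by
    rw [Matrix.trace]
    rw [Finset.sum_comm]
    congr 1; ext b
    simp [Matrix.diag, Matrix.mul_apply, pow_two]
  obtain ⟨hdet, htrace⟩ := aux_det_eigen hS
  have hsum : ∑ i, hS.isHermitian.eigenvalues i = ∑ a, ∑ b, A a b ^ 2 := by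
    rw [← htrace, htr]
  rw [← hsum, hdet]
  exact aux_scalar _ (fun i => hS.eigenvalues_nonneg i) (le_of_eq_of_le hsum hT)
instance matrixMeasurableSpace {n m : ℕ} : MeasurableSpace (Matrix (Fin n) (Fin m) ℝ) :=
  inferInstanceAs (MeasurableSpace (Fin n → Fin m → ℝ))

instance matrixBorelSpace {n m : ℕ} : BorelSpace (Matrix (Fin n) (Fin m) ℝ) :=
  inferInstanceAs (BorelSpace (Fin n → Fin m → ℝ))

set_option maxHeartbeats 1000000 in
/-- Taylor expansion of the mass of the graph of a Lipschitz `Q`-valued map: there exist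
`c̄, C > 0`, depending only on `m`, `n`, `Q`, such that for every bounded open `Ω ⊂ ℝᵐ` and
all Lipschitz `f₁, …, f_Q : Ω → ℝⁿ` with `Lip(fᵢ) ≤ c̄`,
`|∑ᵢ ∫_Ω √(det(Id + Dfᵢᵀ Dfᵢ)) − Q|Ω| − ½ ∫_Ω ∑ᵢ |Dfᵢ|²| ≤ C ∫_Ω ∑ᵢ |Dfᵢ|⁴`. -/
theorem statement4 (m n Q : ℕ) (hm : 1 ≤ m) (hn : 1 ≤ n) (hQ : 1 ≤ Q) :
    ∃ cbar : ℝ≥0, 0 < cbar ∧ ∃ C : ℝ, 0 < C ∧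
      ∀ Ω : Set (EuclideanSpace ℝ (Fin m)), IsOpen Ω → Bornology.IsBounded Ω →
      ∀ f : Fin Q → EuclideanSpace ℝ (Fin m) → EuclideanSpace ℝ (Fin n),
        (∀ i, LipschitzOnWith cbar (f i) Ω) →
        |(∑ i, ∫ x in Ω, Real.sqrt
              ((1 + (jacobianWithin m n (f i) Ω x)ᵀ * jacobianWithin m n (f i) Ω x).det))
            - Q * (volume Ω).toReal
            - (1 / 2) * ∫ x in Ω, ∑ i, frobNorm m n (jacobianWithin m n (f i) Ω x) ^ 2|
          ≤ C * ∫ x in Ω, ∑ i, frobNorm m n (jacobianWithin m n (f i) Ω x) ^ 4 := by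
  classical
  have hNpos : (0:ℝ) < (m:ℝ) * n := by
    have := Nat.one_le_iff_ne_zero.mp hm
    positivity
  refine ⟨((m : ℝ≥0) * n)⁻¹, ?_, 1, one_pos, ?_⟩
  · rw [inv_pos]
    have hm0 : (0:ℝ≥0) < m := by exact_mod_cast Nat.pos_of_ne_zero (Nat.one_le_iff_ne_zero.mp hm)
    have hn0 : (0:ℝ≥0) < n := by exact_mod_cast Nat.pos_of_ne_zero (Nat.one_le_iff_ne_zero.mp hn)
    exact mul_pos hm0 hn0
  intro Ω hopen hbdd f hf
  set cbar : ℝ≥0 := ((m : ℝ≥0) * n)⁻¹ with hcbar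
  have hcℝ : (cbar:ℝ) = ((m:ℝ) * n)⁻¹ := by push_cast [hcbar]; norm_num
  have hΩm : MeasurableSet Ω := hopen.measurableSet
  have hΩfin : volume Ω < ⊤ := hbdd.measure_lt_top
  haveI : IsFiniteMeasure (volume.restrict Ω) :=
    ⟨by rwa [Measure.restrict_apply_univ]⟩
  -- notation
  set J : Fin Q → EuclideanSpace ℝ (Fin m) → Matrix (Fin n) (Fin m) ℝ :=
    fun i x => jacobianWithin m n (f i) Ω x with hJ
  set G : Fin Q → EuclideanSpace ℝ (Fin m) → Matrix (Fin n) (Fin m) ℝ :=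
    fun i x a b => ⟪fderiv ℝ (f i) x (EuclideanSpace.single b 1), EuclideanSpace.single a 1⟫
    with hG
  have hJG : ∀ i, ∀ x ∈ Ω, J i x = G i x := by
    intro i x hx
    funext a b
    simp only [hJ, hG, jacobianWithin, fderivWithin_of_isOpen hopen hx]
  set T : Fin Q → EuclideanSpace ℝ (Fin m) → ℝ := fun i x => ∑ a, ∑ b, (J i x) a b ^ 2 with hT
  have hT0 : ∀ i x, 0 ≤ T i x := fun i x =>
    Finset.sum_nonneg fun a _ => Finset.sum_nonneg fun b _ => sq_nonneg _
  have hfrob2 : ∀ i x, frobNorm m n (J i x) ^ 2 = T i x := fun i x =>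
    Real.sq_sqrt (hT0 i x)
  have hfrob4 : ∀ i x, frobNorm m n (J i x) ^ 4 = T i x ^ 2 := by
    intro i x
    have : frobNorm m n (J i x) ^ 4 = (frobNorm m n (J i x) ^ 2) ^ 2 := by ring
    rw [this, hfrob2]
  -- entry bound and T ≤ 1 on Ω
  have hTle1 : ∀ i, ∀ x ∈ Ω, T i x ≤ 1 := by
    intro i x hx
    have hentry : ∀ a b, (J i x) a b ^ 2 ≤ (cbar:ℝ) ^ 2 := by
      intro a b
      have h1 : |(J i x) a b| ≤ (cbar:ℝ) := by
        rw [hJG i x hx]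
        simp only [hG]
        calc |⟪fderiv ℝ (f i) x (EuclideanSpace.single b 1), EuclideanSpace.single a 1⟫|
            ≤ ‖fderiv ℝ (f i) x (EuclideanSpace.single b 1)‖ * ‖(EuclideanSpace.single a 1 :
                EuclideanSpace ℝ (Fin n))‖ := abs_real_inner_le_norm _ _
          _ ≤ ‖fderiv ℝ (f i) x‖ * ‖(EuclideanSpace.single b 1 :
                EuclideanSpace ℝ (Fin m))‖ * ‖(EuclideanSpace.single a 1 :
                EuclideanSpace ℝ (Fin n))‖ := by
              gcongr
              exact (fderiv ℝ (f i) x).le_opNorm _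
          _ ≤ (cbar:ℝ) := by
              rw [EuclideanSpace.norm_single, EuclideanSpace.norm_single, norm_one,
                mul_one, mul_one]
              exact norm_fderiv_le_of_lipschitzOn ℝ (hopen.mem_nhds hx) (hf i)
      calc (J i x) a b ^ 2 = |(J i x) a b| ^ 2 := (sq_abs _).symm
        _ ≤ (cbar:ℝ) ^ 2 := pow_le_pow_left₀ (abs_nonneg _) h1 2
    have hsum : T i x ≤ (n:ℝ) * m * (cbar:ℝ) ^ 2 := by
      calc T i x ≤ ∑ _a : Fin n, ∑ _b : Fin m, (cbar:ℝ) ^ 2 :=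
            Finset.sum_le_sum fun a _ => Finset.sum_le_sum fun b _ => hentry a b
        _ = (n:ℝ) * m * (cbar:ℝ) ^ 2 := by
            simp [Finset.sum_const, mul_assoc]
    refine hsum.trans ?_
    rw [hcℝ]
    rw [show (n:ℝ) * m * (((m:ℝ) * n)⁻¹) ^ 2 = ((m:ℝ)*n) * (((m:ℝ) * n)⁻¹) ^ 2 by ring]
    rw [sq, ← mul_assoc, mul_inv_cancel₀ hNpos.ne', one_mul]
    have h1m : (1:ℝ) ≤ m := by exact_mod_cast hm
    have h1n : (1:ℝ) ≤ n := by exact_mod_cast hn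
    exact inv_le_one_of_one_le₀ (by nlinarith)
  -- pointwise main estimate
  have hpt : ∀ i, ∀ x ∈ Ω,
      |Real.sqrt ((1 + (J i x)ᵀ * J i x).det) - 1 - T i x / 2| ≤ T i x ^ 2 := by
    intro i x hx
    exact aux_det_est m n (J i x) (hTle1 i x hx)
  -- measurability
  have measG : ∀ i, Measurable (G i) := by
    intro i
    apply measurable_pi_lambda
    intro a
    apply measurable_pi_lambda
    intro b
    have h1 : Measurable fun x => fderiv ℝ (f i) x (EuclideanSpace.single b 1) :=
      measurable_fderiv_apply_const ℝ (f i) _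
    have h2 : Continuous fun v : EuclideanSpace ℝ (Fin n) =>
        ⟪v, (EuclideanSpace.single a 1 : EuclideanSpace ℝ (Fin n))⟫ :=
      continuous_id.inner continuous_const
    exact h2.measurable.comp h1
  have contD : Continuous fun M : Matrix (Fin n) (Fin m) ℝ =>
      Real.sqrt ((1 + Mᵀ * M).det) :=
    Real.continuous_sqrt.comp
      ((continuous_const.add ((continuous_id.matrix_transpose).matrix_mul
        continuous_id)).matrix_det)
  have contT : Continuous fun M : Matrix (Fin n) (Fin m) ℝ => ∑ a, ∑ b, M a b ^ 2 := by
    apply continuous_finset_sum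
    intro a _
    apply continuous_finset_sum
    intro b _
    exact ((continuous_apply b).comp (continuous_apply a)).pow 2
  have hmem : ∀ᵐ x ∂(volume.restrict Ω), x ∈ Ω := ae_restrict_mem hΩm
  -- the three families of integrands
  set g : Fin Q → EuclideanSpace ℝ (Fin m) → ℝ :=
    fun i x => Real.sqrt ((1 + (J i x)ᵀ * J i x).det) with hg
  have aesm_g : ∀ i, AEStronglyMeasurable (g i) (volume.restrict Ω) := by
    intro i
    have hmeas : Measurable fun x => Real.sqrt ((1 + (G i x)ᵀ * G i x).det) :=
      contD.measurable.comp (measG i)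
    refine hmeas.aestronglyMeasurable.congr ?_
    filter_upwards [hmem] with x hx
    simp only [hg, hJG i x hx]
  have aesm_T : ∀ i, AEStronglyMeasurable (T i) (volume.restrict Ω) := by
    intro i
    have hmeas : Measurable fun x => ∑ a, ∑ b, (G i x) a b ^ 2 :=
      contT.measurable.comp (measG i)
    refine hmeas.aestronglyMeasurable.congr ?_
    filter_upwards [hmem] with x hx
    simp only [hT, hJG i x hx]
  -- integrability
  have int_T : ∀ i, Integrable (T i) (volume.restrict Ω) := by
    intro i
    refine ⟨aesm_T i, HasFiniteIntegral.of_bounded (C := 1) ?_⟩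
    filter_upwards [hmem] with x hx
    rw [Real.norm_eq_abs, abs_of_nonneg (hT0 i x)]
    exact hTle1 i x hx
  have int_T2 : ∀ i, Integrable (fun x => T i x ^ 2) (volume.restrict Ω) := by
    intro i
    refine ⟨(aesm_T i).pow 2, HasFiniteIntegral.of_bounded (C := 1) ?_⟩
    filter_upwards [hmem] with x hx
    rw [Real.norm_eq_abs, abs_of_nonneg (sq_nonneg _)]
    have h1 := hTle1 i x hx
    have h0 := hT0 i x
    nlinarith
  have int_g : ∀ i, Integrable (g i) (volume.restrict Ω) := by
    intro i
    refine ⟨aesm_g i, HasFiniteIntegral.of_bounded (C := 5/2) ?_⟩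
    filter_upwards [hmem] with x hx
    have h1 := hpt i x hx
    have h2 := hTle1 i x hx
    have h0 := hT0 i x
    rw [Real.norm_eq_abs]
    have h3 := abs_le.1 h1
    have h4 : 0 ≤ g i x := Real.sqrt_nonneg _
    rw [abs_of_nonneg h4]
    have : g i x - 1 - T i x / 2 ≤ T i x ^ 2 := h3.2
    nlinarith
  set e : Fin Q → EuclideanSpace ℝ (Fin m) → ℝ := fun i x => g i x - 1 - T i x / 2 with he
  have int_e : ∀ i, Integrable (e i) (volume.restrict Ω) := by
    intro i
    exact ((int_g i).sub (integrable_const 1)).sub ((int_T i).div_const 2)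
  -- rewrite the h and k integrands
  have hrw2 : (fun x => ∑ i, frobNorm m n (jacobianWithin m n (f i) Ω x) ^ 2)
      = fun x => ∑ i, T i x := by
    funext x; exact Finset.sum_congr rfl fun i _ => hfrob2 i x
  have hrw4 : (fun x => ∑ i, frobNorm m n (jacobianWithin m n (f i) Ω x) ^ 4)
      = fun x => ∑ i, T i x ^ 2 := by
    funext x; exact Finset.sum_congr rfl fun i _ => hfrob4 i x
  rw [hrw2, hrw4]
  rw [integral_finset_sum Finset.univ (fun i _ => int_T i),
    integral_finset_sum Finset.univ (fun i _ => int_T2 i), one_mul]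
  -- volume as an integral
  have hvol : (volume Ω).toReal = ∫ _x in Ω, (1:ℝ) := by
    rw [integral_const, measureReal_restrict_apply_univ, smul_eq_mul, mul_one]; rfl
  have hsplit : (∑ i, ∫ x in Ω, g i x) - Q * (volume Ω).toReal
      - (1/2) * ∑ i, ∫ x in Ω, T i x = ∑ i, ∫ x in Ω, e i x := by
    have h1 : ∀ i, ∫ x in Ω, e i x
        = (∫ x in Ω, g i x) - (volume Ω).toReal - (1/2) * ∫ x in Ω, T i x := by
      intro i
      have intg1 : Integrable (fun x => g i x - 1) (volume.restrict Ω) :=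
        (int_g i).sub (integrable_const 1)
      have intT2' : Integrable (fun x => T i x / 2) (volume.restrict Ω) :=
        (int_T i).div_const 2
      rw [show e i = fun x => (g i x - 1) - T i x / 2 from rfl]
      rw [integral_sub intg1 intT2', integral_sub (int_g i) (integrable_const 1),
        integral_div, hvol]
      ring
    rw [Finset.sum_congr rfl fun i _ => h1 i]
    rw [Finset.sum_sub_distrib, Finset.sum_sub_distrib, Finset.sum_const, Finset.card_univ,
      Fintype.card_fin, ← Finset.mul_sum]
    push_cast
    ring
  rw [hsplit]
  calc |∑ i, ∫ x in Ω, e i x| ≤ ∑ i, |∫ x in Ω, e i x| :=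
        Finset.abs_sum_le_sum_abs _ _
    _ ≤ ∑ i, ∫ x in Ω, T i x ^ 2 := by
        apply Finset.sum_le_sum
        intro i _
        calc |∫ x in Ω, e i x| ≤ ∫ x in Ω, |e i x| := by
              simpa [Real.norm_eq_abs] using norm_integral_le_integral_norm (μ := volume.restrict Ω) (e i)
          _ ≤ ∫ x in Ω, T i x ^ 2 := by
              apply integral_mono_ae (int_e i).abs (int_T2 i)
              filter_upwards [hmem] with x hx
              exact hpt i x hx
end

section
/- Let (X,d) be a metric space and s > 0. For A ⊆ X define the Hausdorff content H^s_∞(A) := inf { Σ_{i∈ℕ} (diam U_i)^s : A ⊆ ⋃_{i∈ℕ} U_i }, the infimum being taken over all countable covers of A by subsets of X (with no restriction on their diameters). If K and K_n (n ∈ ℕ) are nonempty compact subsets of X such that the Hausdorff distance between K_n and K tends to 0, then limsup_{n→∞} H^s_∞(K_n) ≤ H^s_∞(K). -/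
open Filter
open scoped ENNReal NNReal Topology

/-- The `s`-dimensional Hausdorff content (pre-measure) of a set in a metric space:
the infimum of `∑ᵢ (diam Uᵢ)^s` over all countable covers `(Uᵢ)` of the set, with no
restriction on the diameters of the covering sets. -/
noncomputable def hausdorffContent {X : Type*} [MetricSpace X] (s : ℝ) (A : Set X) : ℝ≥0∞ :=
  ⨅ (U : ℕ → Set X) (_ : A ⊆ ⋃ i, U i), ∑' i, EMetric.diam (U i) ^ s

/-- Upper semicontinuity of the Hausdorff content under Hausdorff convergence of nonempty
compact sets: if `Kₙ → K` in the Hausdorff distance then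
`limsup_n H^s_∞(Kₙ) ≤ H^s_∞(K)`. -/
theorem statement12 {X : Type*} [MetricSpace X] (s : ℝ) (hs : 0 < s)
    (K : Set X) (hK : IsCompact K) (hKne : K.Nonempty)
    (Kn : ℕ → Set X) (hKn : ∀ n, IsCompact (Kn n)) (hKnne : ∀ n, (Kn n).Nonempty)
    (hconv : Tendsto (fun n => Metric.hausdorffDist (Kn n) K) atTop (𝓝 0)) :
    limsup (fun n => hausdorffContent s (Kn n)) atTop ≤ hausdorffContent s K := by
  refine le_of_forall_gt_imp_ge_of_dense fun C hC => ?_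
  rcases eq_or_ne C ⊤ with rfl | hCtop
  · exact le_top
  -- pick D strictly between
  obtain ⟨D, hD1, hD2⟩ := exists_between hC
  have hDtop : D ≠ ⊤ := (hD2.trans_le le_top).ne
  -- pick a cover of K with total mass < D
  obtain ⟨U, hUcov, hUsum⟩ : ∃ U : ℕ → Set X, K ⊆ ⋃ i, U i ∧
      ∑' i, EMetric.diam (U i) ^ s < D := by
    have := hD1
    rw [hausdorffContent, iInf_lt_iff] at this
    obtain ⟨U, hU⟩ := this
    rw [iInf_lt_iff] at hU
    obtain ⟨h1, h2⟩ := hU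
    exact ⟨U, h1, h2⟩
  -- positive errors summing to < C - D
  have hCD : (0 : ℝ≥0∞) < C - D := tsub_pos_of_lt hD2
  obtain ⟨ε, hεpos, hεsum⟩ := ENNReal.exists_pos_sum_of_countable' hCD.ne' ℕ
  -- for each i, thicken U i slightly keeping mass controlled
  have key : ∀ i : ℕ, ∃ δ : ℝ≥0, 0 < δ ∧
      EMetric.diam (Metric.thickening δ (U i)) ^ s ≤ EMetric.diam (U i) ^ s + ε i := by
    intro i
    have hfin : EMetric.diam (U i) ^ s ≠ ⊤ := by
      intro h
      have hle : EMetric.diam (U i) ^ s ≤ ∑' j, EMetric.diam (U j) ^ s :=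
        ENNReal.le_tsum i
      rw [h] at hle
      exact hDtop (top_le_iff.mp (hle.trans hUsum.le))
    have hcont : ContinuousAt (fun t : ℝ≥0 =>
        (EMetric.diam (U i) + ((2 * t : ℝ≥0) : ℝ≥0∞)) ^ s) 0 := by
      apply ENNReal.continuous_rpow_const.continuousAt.comp
      exact (continuous_const.add (ENNReal.continuous_coe.comp
        (continuous_const.mul continuous_id))).continuousAt
    have hval : (EMetric.diam (U i) + ((2 * (0 : ℝ≥0) : ℝ≥0) : ℝ≥0∞)) ^ s
        < EMetric.diam (U i) ^ s + ε i := by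
      simp only [mul_zero, ENNReal.coe_zero, add_zero]
      exact ENNReal.lt_add_right hfin (hεpos i).ne'
    have := hcont.eventually_lt_const hval
    obtain ⟨d, hdpos, hd⟩ := Metric.eventually_nhds_iff.mp this
    set η : ℝ≥0 := (d / 2).toNNReal with hη
    have hηpos : 0 < η := Real.toNNReal_pos.mpr (by linarith)
    have hηd : dist η 0 < d := by
      have : (η : ℝ) = d / 2 := Real.coe_toNNReal _ (by linarith)
      simp [NNReal.dist_eq, this, abs_of_nonneg, hdpos.le]
      rw [abs_of_nonneg (by linarith)]
      linarith
    refine ⟨η, hηpos, ?_⟩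
    calc EMetric.diam (Metric.thickening η (U i)) ^ s
        ≤ (EMetric.diam (U i) + 2 * (η : ℝ≥0∞)) ^ s :=
          ENNReal.rpow_le_rpow (Metric.ediam_thickening_le _) hs.le
      _ = (EMetric.diam (U i) + ((2 * η : ℝ≥0) : ℝ≥0∞)) ^ s := by push_cast; ring_nf
      _ ≤ EMetric.diam (U i) ^ s + ε i := (hd hηd).le
  choose δ hδpos hδle using key
  set V : ℕ → Set X := fun i => Metric.thickening (δ i) (U i) with hV
  have hVopen : IsOpen (⋃ i, V i) := isOpen_iUnion fun i => Metric.isOpen_thickening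
  have hKV : K ⊆ ⋃ i, V i :=
    hUcov.trans (Set.iUnion_mono fun i =>
      Metric.self_subset_thickening (by exact_mod_cast hδpos i) _)
  obtain ⟨r, hrpos, hrsub⟩ := hK.exists_thickening_subset_open hVopen hKV
  -- eventually Kn n ⊆ thickening r K ⊆ ⋃ V i
  have hev : ∀ᶠ n in atTop, Metric.hausdorffDist (Kn n) K < r :=
    hconv.eventually (gt_mem_nhds hrpos)
  have hsumV : ∑' i, EMetric.diam (V i) ^ s ≤ C := by
    calc ∑' i, EMetric.diam (V i) ^ s
        ≤ ∑' i, (EMetric.diam (U i) ^ s + ε i) := ENNReal.tsum_le_tsum hδle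
      _ = (∑' i, EMetric.diam (U i) ^ s) + ∑' i, ε i := ENNReal.tsum_add
      _ ≤ D + (C - D) := add_le_add hUsum.le hεsum.le
      _ = C := add_tsub_cancel_of_le hD2.le
  refine limsup_le_of_le (by isBoundedDefault) ?_
  filter_upwards [hev] with n hn
  have hKnV : Kn n ⊆ ⋃ i, V i := by
    refine subset_trans ?_ hrsub
    intro x hx
    have hfin : EMetric.hausdorffEdist (Kn n) K ≠ ⊤ :=
      Metric.hausdorffEdist_ne_top_of_nonempty_of_bounded (hKnne n) hKne
        (hKn n).isBounded hK.isBounded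
    obtain ⟨y, hy, hxy⟩ := Metric.exists_dist_lt_of_hausdorffDist_lt hx hn hfin
    exact Metric.mem_thickening_iff.mpr ⟨y, hy, hxy⟩
  calc hausdorffContent s (Kn n) ≤ ∑' i, EMetric.diam (V i) ^ s :=
        iInf₂_le V hKnV
    _ ≤ C := hsumV
end
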